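/- arXiv:1209.4628 — 3 statements merged into one kernel-verified Lean document; each statement's English description precedes it below -/
import Mathlib

section
/- Let (Ge, Go) be a signed graph on a finite vertex type V and let v₁, v₂, v₃ be distinct vertices that are pairwise adjacent in Ge ⊔ Go, with each pair vᵢ, vⱼ adjacent in exactly one of Ge, Go, and with an even number (0 or 2) of the three pairs adjacent in Go (an even triangle). Let (Ge', Go') be the signed graph on Option V with new vertex w (the ΔY-transformation on the triangle): on pairs of old vertices, Ge'.Adj x y iff Ge.Adj x y and {x, y} is not one of the three triangle pairs, and Go'.Adj x y iff Go.Adj x y and {x, y} is not one of the three triangle pairs; w is adjacent to exactly v₁, v₂, v₃, where if none of the three triangle edges is odd then wv₁, wv₂, wv₃ are all even, and if exactly two triangle edges are odd, with vₖ the common end of the two odd edges, then wvₖ is odd and the other two new edges are even. Then M₊(Ge, Go) ≤ M₊(Ge', Go') and ν(Ge, Go) ≤ ν(Ge', Go'). -/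
open Matrix

/-- The set `S(Ge, Go)` of real symmetric matrices compatible with the signed graph
encoded by the pair of simple graphs `(Ge, Go)` (even graph / odd graph). -/
def SignedSet {V : Type*} (Ge Go : SimpleGraph V) : Set (Matrix V V ℝ) :=
  {A | A.IsSymm ∧ ∀ i j,
    ((Ge.Adj i j ∧ ¬ Go.Adj i j) → A i j < 0) ∧
    ((Go.Adj i j ∧ ¬ Ge.Adj i j) → 0 < A i j) ∧
    ((i ≠ j ∧ ¬ Ge.Adj i j ∧ ¬ Go.Adj i j) → A i j = 0)}

/-- The nullity of a matrix: the dimension of its kernel. -/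
noncomputable def matNullity {V : Type*} [Fintype V] (A : Matrix V V ℝ) : ℕ :=
  Module.finrank ℝ (LinearMap.ker A.mulVecLin)

/-- The Strong Arnold Property for a matrix with respect to a signed graph `(Ge, Go)`. -/
def HasSAP {V : Type*} [Fintype V] (Ge Go : SimpleGraph V) (A : Matrix V V ℝ) : Prop :=
  ∀ X : Matrix V V ℝ, X.IsSymm →
    (∀ i j, (i = j ∨ (Ge ⊔ Go).Adj i j) → X i j = 0) →
    A * X = 0 → X = 0

/-- `ν(Ge, Go)`: the maximum nullity of a positive semidefinite matrix in `S(Ge, Go)`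
having the Strong Arnold Property. -/
noncomputable def nuSigned {V : Type*} [Fintype V] (Ge Go : SimpleGraph V) : ℕ :=
  sSup {n | ∃ A ∈ SignedSet Ge Go, A.PosSemidef ∧ HasSAP Ge Go A ∧ matNullity A = n}

/-- `M₊(Ge, Go)`: the maximum nullity of a positive semidefinite matrix in `S(Ge, Go)`. -/
noncomputable def MplusSigned {V : Type*} [Fintype V] (Ge Go : SimpleGraph V) : ℕ :=
  sSup {n | ∃ A ∈ SignedSet Ge Go, A.PosSemidef ∧ matNullity A = n}

/-- A signed graph `(Ge, Go)` is bipartite (balanced) if some set `U` of vertices meets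
every odd edge in exactly one end and every even edge in both ends or neither end. -/
def IsBalanced {V : Type*} (Ge Go : SimpleGraph V) : Prop :=
  ∃ U : Set V, (∀ i j, Go.Adj i j → ((i ∈ U) ↔ j ∉ U)) ∧
    (∀ i j, Ge.Adj i j → ((i ∈ U) ↔ j ∈ U))

/-!
Let `A` be a positive semidefinite matrix realizing `(Ge, Go)`, with triangle entries
`a₁₂, a₁₃, a₂₃`. Extend it by the new vertex `w` to
`A' = [[c, bᵀ], [b, A + b bᵀ / c]]` with `c > 0` and `b` supported on the triangle.
The Schur complement of the entry `c` in `A'` is `A`, so `A'` is positive semidefinite,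
`z ↦ z|_V` is an isomorphism `ker A' ≃ ker A`, and a symmetric `X'` with `A' X' = 0`
restricts to an `X` with `A X = 0`. The triangle entries of `A'` vanish exactly when
`bᵢ bⱼ = -c aᵢⱼ`, which has a solution with `c > 0` iff `a₁₂ a₁₃ a₂₃ < 0`, i.e. iff the
triangle is even; the signs of the `bᵢ` then match the signs of the new edges `wvᵢ`.
For the Strong Arnold Property, the rows of `A' X' = 0` at `w` give three linear equations
in the triangle entries of `X` whose determinant is `-2 b₁ b₂ b₃ ≠ 0`, so `X` vanishes on
the triangle as well and the SAP of `A` applies.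
-/

section SignedEntry

variable {V : Type*} {Ge Go : SimpleGraph V} {i j : V} {a : ℝ}

variable (Ge Go) in
def SignedEntry (i j : V) (a : ℝ) : Prop :=
  ((Ge.Adj i j ∧ ¬ Go.Adj i j) → a < 0) ∧ ((Go.Adj i j ∧ ¬ Ge.Adj i j) → 0 < a) ∧
    ((i ≠ j ∧ ¬ Ge.Adj i j ∧ ¬ Go.Adj i j) → a = 0)

theorem mem_signedSet_iff {A : Matrix V V ℝ} :
    A ∈ SignedSet Ge Go ↔ A.IsSymm ∧ ∀ i j, SignedEntry Ge Go i j (A i j) :=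
  Iff.rfl

theorem SignedEntry.symm (h : SignedEntry Ge Go i j a) : SignedEntry Ge Go j i a := by
  simpa only [SignedEntry, SimpleGraph.adj_comm, ne_comm] using h

theorem signedEntry_self : SignedEntry Ge Go i i a := by
  simp [SignedEntry]

theorem signedEntry_of_adj_iff (he : Ge.Adj i j ↔ a < 0) (ho : Go.Adj i j ↔ 0 < a) :
    SignedEntry Ge Go i j a := by
  simp only [SignedEntry, he, ho]
  exact ⟨And.left, And.left, fun h => le_antisymm (not_lt.1 h.2.2) (not_lt.1 h.2.1)⟩

theorem signedEntry_zero (he : ¬ Ge.Adj i j) (ho : ¬ Go.Adj i j) : SignedEntry Ge Go i j 0 :=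
  signedEntry_of_adj_iff (iff_of_false he (lt_irrefl 0)) (iff_of_false ho (lt_irrefl 0))

theorem SignedEntry.ne_zero_and_pos_iff (h : SignedEntry Ge Go i j a) (hadj : (Ge ⊔ Go).Adj i j)
    (hone : ¬ (Ge.Adj i j ∧ Go.Adj i j)) : a ≠ 0 ∧ (0 < a ↔ Go.Adj i j) := by
  obtain ⟨hneg, hpos, -⟩ := h
  rcases hadj with he | ho
  · have ha := hneg ⟨he, fun ho => hone ⟨he, ho⟩⟩
    exact ⟨ha.ne, iff_of_false ha.not_gt fun ho => hone ⟨he, ho⟩⟩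
  · have ha := hpos ⟨ho, fun he => hone ⟨he, ho⟩⟩
    exact ⟨ha.ne', iff_of_true ha ho⟩

end SignedEntry

theorem mul_mul_neg_of_not_xor {a b c : ℝ} (ha : a ≠ 0) (hb : b ≠ 0) (hc : c ≠ 0)
    (h : ¬ Xor (0 < a) (Xor (0 < b) (0 < c))) : a * b * c < 0 := by
  simp only [mul_neg_iff, mul_pos_iff]
  have := ha.lt_or_gt; have := hb.lt_or_gt; have := hc.lt_or_gt
  grind [Xor]

theorem exists_deltaY_weights {a₁₂ a₁₃ a₂₃ : ℝ} (h : a₁₂ * a₁₃ * a₂₃ < 0) :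
    ∃ c > 0, ∃ b₁ b₂ b₃ : ℝ,
      a₁₂ + b₁ * b₂ / c = 0 ∧ a₁₃ + b₁ * b₃ / c = 0 ∧ a₂₃ + b₂ * b₃ / c = 0 ∧
      (0 < b₁ ↔ 0 < a₁₂ ∧ 0 < a₁₃) ∧ (0 < b₂ ↔ 0 < a₁₂ ∧ 0 < a₂₃) ∧
      (0 < b₃ ↔ 0 < a₁₃ ∧ 0 < a₂₃) := by
  have h₁₂ : a₁₂ ≠ 0 := by rintro rfl; simp at h
  have h₁₃ : a₁₃ ≠ 0 := by rintro rfl; simp at h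
  obtain ⟨c, hc, rfl⟩ : ∃ c > 0, a₂₃ = -(c * a₁₂ * a₁₃) :=
    ⟨-(a₁₂ * a₁₃ * a₂₃) / (a₁₂ * a₁₃) ^ 2, div_pos (neg_pos.2 h) (by positivity),
      by field_simp⟩
  obtain ⟨s, hs, hs_pos⟩ : ∃ s : ℝ, s * s = 1 ∧ (0 < s ↔ 0 < a₁₂ ∧ 0 < a₁₃) := by
    by_cases hpos : 0 < a₁₂ ∧ 0 < a₁₃
    · exact ⟨1, one_mul 1, iff_of_true one_pos hpos⟩
    · exact ⟨-1, by norm_num, iff_of_false (by norm_num) hpos⟩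
  have hs₀ : s ≠ 0 := by rintro rfl; simp at hs
  refine ⟨c, hc, s, -(c * a₁₂ * s), -(c * a₁₃ * s), ?_, ?_, ?_, hs_pos, ?_, ?_⟩
  · field_simp; linear_combination -a₁₂ * hs
  · field_simp; linear_combination -a₁₃ * hs
  · field_simp; linear_combination c * a₁₂ * a₁₃ * hs
  all_goals
    simp only [neg_pos, mul_neg_iff, mul_pos_iff, hc, hc.not_gt, true_and, false_and,
      or_false] at hs_pos ⊢
    have := h₁₂.lt_or_gt; have := h₁₃.lt_or_gt; have := hs₀.lt_or_gt
    grind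

theorem triangle_system_eq_zero {b₁ b₂ b₃ x₁₂ x₁₃ x₂₃ : ℝ} (hb₁ : b₁ ≠ 0) (hb₂ : b₂ ≠ 0)
    (hb₃ : b₃ ≠ 0) (h₁ : b₂ * x₁₂ + b₃ * x₁₃ = 0) (h₂ : b₁ * x₁₂ + b₃ * x₂₃ = 0)
    (h₃ : b₁ * x₁₃ + b₂ * x₂₃ = 0) : x₁₂ = 0 ∧ x₁₃ = 0 ∧ x₂₃ = 0 := by
  have e₁₂ : 2 * b₁ * b₂ * x₁₂ = 0 := by linear_combination b₁ * h₁ + b₂ * h₂ - b₃ * h₃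
  have e₁₃ : 2 * b₁ * b₃ * x₁₃ = 0 := by linear_combination b₁ * h₁ - b₂ * h₂ + b₃ * h₃
  have e₂₃ : 2 * b₂ * b₃ * x₂₃ = 0 := by linear_combination -b₁ * h₁ + b₂ * h₂ + b₃ * h₃
  simp_all

section SchurExtension

variable {V : Type*} {A : Matrix V V ℝ} {b : V → ℝ} {c : ℝ}

variable (A b c) in
noncomputable def schurExtension : Matrix (Option V) (Option V) ℝ :=
  of fun p q => match p, q with
    | none, none => c
    | none, some y => b y
    | some x, none => b x
    | some x, some y => A x y + b x * b y / c

@[simp] theorem schurExtension_none_none : schurExtension A b c none none = c := rfl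
@[simp] theorem schurExtension_none_some (y : V) : schurExtension A b c none (some y) = b y := rfl
@[simp] theorem schurExtension_some_none (x : V) : schurExtension A b c (some x) none = b x := rfl
@[simp] theorem schurExtension_some_some (x y : V) :
    schurExtension A b c (some x) (some y) = A x y + b x * b y / c := rfl

theorem schurExtension_isSymm (hA : A.IsSymm) : (schurExtension A b c).IsSymm :=
  IsSymm.ext fun
    | none, none => rfl
    | none, some _ => rfl
    | some _, none => rfl
    | some x, some y => by simp [hA.apply x y, mul_comm]

variable [Fintype V]

theorem schurExtension_mulVec_none (z : Option V → ℝ) :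
    (schurExtension A b c *ᵥ z) none = c * z none + b ⬝ᵥ (z ∘ some) := by
  simp [mulVec, dotProduct, Fintype.sum_option]

theorem schurExtension_mulVec_some (hc : c ≠ 0) (z : Option V → ℝ) (x : V) :
    (schurExtension A b c *ᵥ z) (some x) =
      (A *ᵥ (z ∘ some)) x + b x / c * (c * z none + b ⬝ᵥ (z ∘ some)) := by
  have hterm : ∀ y, b x * b y / c * z (some y) = b x / c * (b y * z (some y)) :=
    fun y => by ring
  simp only [mulVec, dotProduct, Fintype.sum_option, schurExtension_some_none,
    schurExtension_some_some, Function.comp_apply, add_mul, Finset.sum_add_distrib, hterm,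
    ← Finset.mul_sum]
  field_simp
  ring

theorem schurExtension_mulVec_eq_zero_iff (hc : c ≠ 0) {z : Option V → ℝ} :
    schurExtension A b c *ᵥ z = 0 ↔
      A *ᵥ (z ∘ some) = 0 ∧ c * z none + b ⬝ᵥ (z ∘ some) = 0 := by
  constructor
  · intro h
    have hnone : c * z none + b ⬝ᵥ (z ∘ some) = 0 := by
      rw [← schurExtension_mulVec_none, h, Pi.zero_apply]
    refine ⟨funext fun x => ?_, hnone⟩
    simpa [schurExtension_mulVec_some hc, hnone] using congr_fun h (some x)
  · rintro ⟨hA, hnone⟩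
    funext p
    cases p with
    | none => rw [schurExtension_mulVec_none, hnone, Pi.zero_apply]
    | some x => simp [schurExtension_mulVec_some hc, hA, hnone]

theorem dotProduct_schurExtension_mulVec (hc : c ≠ 0) (z : Option V → ℝ) :
    z ⬝ᵥ (schurExtension A b c *ᵥ z) =
      (z ∘ some) ⬝ᵥ (A *ᵥ (z ∘ some)) + (c * z none + b ⬝ᵥ (z ∘ some)) ^ 2 / c := by
  have hsome : ∀ x, z (some x) * (schurExtension A b c *ᵥ z) (some x) =
      (z ∘ some) x * (A *ᵥ (z ∘ some)) x +
        b x * z (some x) / c * (c * z none + b ⬝ᵥ (z ∘ some)) := fun x => by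
    rw [schurExtension_mulVec_some hc]
    simp only [Function.comp_apply]
    ring
  rw [dotProduct, Fintype.sum_option, Finset.sum_congr rfl fun x _ => hsome x,
    Finset.sum_add_distrib, ← Finset.sum_mul, ← Finset.sum_div, schurExtension_mulVec_none]
  simp only [dotProduct, Function.comp_apply]
  field_simp
  ring

theorem schurExtension_posSemidef (hA : A.PosSemidef) (hc : 0 < c) :
    (schurExtension A b c).PosSemidef := by
  refine .of_dotProduct_mulVec_nonneg ?_ fun z => ?_
  · exact isHermitian_iff_isSymm.2 (schurExtension_isSymm (isHermitian_iff_isSymm.1 hA.isHermitian))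
  · rw [star_trivial, dotProduct_schurExtension_mulVec hc.ne']
    have := hA.dotProduct_mulVec_nonneg (z ∘ some)
    rw [star_trivial] at this
    positivity

theorem matNullity_schurExtension (hc : c ≠ 0) :
    matNullity (schurExtension A b c) = matNullity A := by
  have hker : ∀ z, z ∈ LinearMap.ker (schurExtension A b c).mulVecLin ↔
      z ∘ some ∈ LinearMap.ker A.mulVecLin ∧ c * z none + b ⬝ᵥ (z ∘ some) = 0 := by
    simp [schurExtension_mulVec_eq_zero_iff hc]
  refine LinearEquiv.finrank_eq (.ofBijective ((LinearMap.funLeft ℝ ℝ some).restrict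
    fun z hz => ((hker z).1 hz).1) ⟨fun ⟨z₁, h₁⟩ ⟨z₂, h₂⟩ h => ?_, fun ⟨w, hw⟩ => ?_⟩)
  · have hsome : z₁ ∘ some = z₂ ∘ some := congrArg Subtype.val h
    have hnone : c * z₁ none = c * z₂ none := by
      linear_combination ((hker z₁).1 h₁).2 - ((hker z₂).1 h₂).2 +
        congrArg (b ⬝ᵥ ·) hsome.symm
    ext (_ | x)
    · exact mul_left_cancel₀ hc hnone
    · exact congrFun hsome x
  · refine ⟨⟨fun p => p.elim (-(b ⬝ᵥ w) / c) w, (hker _).2 ⟨hw, ?_⟩⟩, rfl⟩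
    change c * (-(b ⬝ᵥ w) / c) + b ⬝ᵥ w = 0
    field_simp
    ring

end SchurExtension

section SignedSchurExtension

variable {V : Type*} {Ge Go : SimpleGraph V} {Ge' Go' : SimpleGraph (Option V)}
  {A : Matrix V V ℝ} {b : V → ℝ} {c : ℝ} {T : Set V}

theorem schurExtension_mem_signedSet (hA : A.IsSymm)
    (hnew : ∀ x, SignedEntry Ge' Go' none (some x) (b x))
    (hold : ∀ x y, SignedEntry Ge' Go' (some x) (some y) (A x y + b x * b y / c)) :
    schurExtension A b c ∈ SignedSet Ge' Go' :=
  ⟨schurExtension_isSymm hA, fun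
    | none, none => signedEntry_self
    | none, some y => hnew y
    | some x, none => (hnew x).symm
    | some x, some y => hold x y⟩

theorem signedEntry_some_some_of_cancel (hA : ∀ x y, SignedEntry Ge Go x y (A x y))
    (hGe' : ∀ x y, Ge'.Adj (some x) (some y) ↔ Ge.Adj x y ∧ ¬(x ∈ T ∧ y ∈ T))
    (hGo' : ∀ x y, Go'.Adj (some x) (some y) ↔ Go.Adj x y ∧ ¬(x ∈ T ∧ y ∈ T))
    (hb : ∀ x ∉ T, b x = 0) (hT : ∀ x ∈ T, ∀ y ∈ T, x ≠ y → A x y + b x * b y / c = 0)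
    (x y : V) : SignedEntry Ge' Go' (some x) (some y) (A x y + b x * b y / c) := by
  by_cases hxy : x ∈ T ∧ y ∈ T
  · rcases eq_or_ne x y with rfl | hne
    · exact signedEntry_self
    · rw [hT x hxy.1 y hxy.2 hne]
      exact signedEntry_zero (by simp [hGe', hxy]) (by simp [hGo', hxy])
  · have hbb : b x * b y = 0 := by
      rcases not_and_or.1 hxy with hx | hy
      · simp [hb x hx]
      · simp [hb y hy]
    simpa [SignedEntry, hGe', hGo', hxy, hbb] using hA x y

variable [Fintype V]

theorem hasSAP_schurExtension (hc : c ≠ 0) (hA : HasSAP Ge Go A)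
    (hGe' : ∀ x y, Ge'.Adj (some x) (some y) ↔ Ge.Adj x y ∧ ¬(x ∈ T ∧ y ∈ T))
    (hGo' : ∀ x y, Go'.Adj (some x) (some y) ↔ Go.Adj x y ∧ ¬(x ∈ T ∧ y ∈ T))
    (hw : ∀ x ∈ T, (Ge' ⊔ Go').Adj none (some x))
    (hrigid : ∀ X : Matrix V V ℝ, X.IsSymm → (∀ x, X x x = 0) → (∀ u ∈ T, (b ᵥ* X) u = 0) →
      ∀ x ∈ T, ∀ y ∈ T, X x y = 0) :
    HasSAP Ge' Go' (schurExtension A b c) := by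
  intro X' hX' hzero hmul
  have hcol : ∀ q, A *ᵥ (fun x => X' (some x) q) = 0 ∧
      c * X' none q + b ⬝ᵥ (fun x => X' (some x) q) = 0 := fun q =>
    (schurExtension_mulVec_eq_zero_iff hc).1 (funext fun p => congrFun (congrFun hmul p) q)
  set X := X'.submatrix some some
  have hXT := hrigid X (hX'.submatrix some) (fun x => hzero _ _ (Or.inl rfl)) fun u hu => by
    change b ⬝ᵥ (fun x => X' (some x) (some u)) = 0
    simpa [hzero none (some u) (Or.inr (hw u hu))] using (hcol (some u)).2
  have hX : X = 0 := by
    refine hA X (hX'.submatrix some) (fun x y hxy => ?_)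
      (by ext x u; exact congrFun (hcol (some u)).1 x)
    by_cases hT : x ∈ T ∧ y ∈ T
    · exact hXT x hT.1 y hT.2
    · refine hzero _ _ (hxy.imp (congrArg some) fun h => ?_)
      simp only [SimpleGraph.sup_adj, hGe', hGo'] at h ⊢
      tauto
  have hsome : ∀ x y, X' (some x) (some y) = 0 := fun x y => congrFun (congrFun hX x) y
  have hnone : ∀ y, X' none (some y) = 0 := fun y => by
    simpa [hsome, hc] using (hcol (some y)).2
  ext (_ | x) (_ | y)
  · exact hzero _ _ (Or.inl rfl)
  · exact hnone y
  · rw [hX'.apply none (some x)]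
    exact hnone x
  · exact hsome x y

end SignedSchurExtension

section Triangle

variable {V : Type*} {v₁ v₂ v₃ : V}

theorem add_mul_div_eq_zero_on_triangle {A : Matrix V V ℝ} (hA : A.IsSymm) {b : V → ℝ} {c : ℝ}
    (e₁₂ : A v₁ v₂ + b v₁ * b v₂ / c = 0) (e₁₃ : A v₁ v₃ + b v₁ * b v₃ / c = 0)
    (e₂₃ : A v₂ v₃ + b v₂ * b v₃ / c = 0) :
    ∀ x ∈ ({v₁, v₂, v₃} : Set V), ∀ y ∈ ({v₁, v₂, v₃} : Set V), x ≠ y →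
      A x y + b x * b y / c = 0 := by
  simp only [Set.mem_insert_iff, Set.mem_singleton_iff]
  rintro _ (rfl | rfl | rfl) _ (rfl | rfl | rfl) hne <;>
    first | exact absurd rfl hne | assumption | rw [hA.apply, mul_comm]; assumption

variable [DecidableEq V] {b₁ b₂ b₃ : ℝ}

theorem single_add_single_add_single_ne_zero_iff (h₁₂ : v₁ ≠ v₂) (h₁₃ : v₁ ≠ v₃)
    (h₂₃ : v₂ ≠ v₃) (hb₁ : b₁ ≠ 0) (hb₂ : b₂ ≠ 0) (hb₃ : b₃ ≠ 0) (x : V) :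
    (Pi.single v₁ b₁ + Pi.single v₂ b₂ + Pi.single v₃ b₃ : V → ℝ) x ≠ 0 ↔
      x = v₁ ∨ x = v₂ ∨ x = v₃ := by
  by_cases hx : x = v₁ ∨ x = v₂ ∨ x = v₃
  · rcases hx with rfl | rfl | rfl <;>
      simp [h₁₂, h₁₃, h₂₃, h₁₂.symm, h₁₃.symm, h₂₃.symm, hb₁, hb₂, hb₃]
  · push Not at hx
    simp [hx]

theorem eq_zero_on_triangle_of_vecMul_eq_zero [Fintype V] (h₁₂ : v₁ ≠ v₂) (h₁₃ : v₁ ≠ v₃)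
    (h₂₃ : v₂ ≠ v₃) (hb₁ : b₁ ≠ 0) (hb₂ : b₂ ≠ 0) (hb₃ : b₃ ≠ 0) (X : Matrix V V ℝ)
    (hX : X.IsSymm) (hdiag : ∀ x, X x x = 0) (hvec : ∀ u ∈ ({v₁, v₂, v₃} : Set V),
      ((Pi.single v₁ b₁ + Pi.single v₂ b₂ + Pi.single v₃ b₃) ᵥ* X) u = 0) :
    ∀ x ∈ ({v₁, v₂, v₃} : Set V), ∀ y ∈ ({v₁, v₂, v₃} : Set V), X x y = 0 := by
  have hcol : ∀ u ∈ ({v₁, v₂, v₃} : Set V), b₁ * X v₁ u + b₂ * X v₂ u + b₃ * X v₃ u = 0 :=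
    fun u hu => by simpa [vecMul, add_dotProduct] using hvec u hu
  obtain ⟨x₁₂, x₁₃, x₂₃⟩ := triangle_system_eq_zero hb₁ hb₂ hb₃
    (by simpa [hdiag, hX.apply v₁ v₂, hX.apply v₁ v₃] using hcol v₁ (by simp))
    (by simpa [hdiag, hX.apply v₂ v₃] using hcol v₂ (by simp))
    (by simpa [hdiag] using hcol v₃ (by simp))
  simp only [Set.mem_insert_iff, Set.mem_singleton_iff]
  rintro _ (rfl | rfl | rfl) _ (rfl | rfl | rfl) <;>
    first | exact hdiag _ | assumption | rw [hX.apply]; assumption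

end Triangle

theorem exists_deltaY_matrix {V : Type*} [Fintype V] {Ge Go : SimpleGraph V} {v₁ v₂ v₃ : V}
    (hadj12 : (Ge ⊔ Go).Adj v₁ v₂) (hadj13 : (Ge ⊔ Go).Adj v₁ v₃)
    (hadj23 : (Ge ⊔ Go).Adj v₂ v₃)
    (hone12 : ¬(Ge.Adj v₁ v₂ ∧ Go.Adj v₁ v₂))
    (hone13 : ¬(Ge.Adj v₁ v₃ ∧ Go.Adj v₁ v₃))
    (hone23 : ¬(Ge.Adj v₂ v₃ ∧ Go.Adj v₂ v₃))
    (heven : ¬ Xor (Go.Adj v₁ v₂) (Xor (Go.Adj v₁ v₃) (Go.Adj v₂ v₃)))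
    {Ge' Go' : SimpleGraph (Option V)}
    (hGe'old : ∀ x y : V, Ge'.Adj (some x) (some y) ↔
      (Ge.Adj x y ∧ ¬(x ∈ ({v₁, v₂, v₃} : Set V) ∧ y ∈ ({v₁, v₂, v₃} : Set V))))
    (hGo'old : ∀ x y : V, Go'.Adj (some x) (some y) ↔
      (Go.Adj x y ∧ ¬(x ∈ ({v₁, v₂, v₃} : Set V) ∧ y ∈ ({v₁, v₂, v₃} : Set V))))
    (hGo'w : ∀ x : V, Go'.Adj none (some x) ↔
      ((x = v₁ ∧ Go.Adj v₁ v₂ ∧ Go.Adj v₁ v₃) ∨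
       (x = v₂ ∧ Go.Adj v₂ v₁ ∧ Go.Adj v₂ v₃) ∨
       (x = v₃ ∧ Go.Adj v₃ v₁ ∧ Go.Adj v₃ v₂)))
    (hGe'w : ∀ x : V, Ge'.Adj none (some x) ↔
      ((x = v₁ ∨ x = v₂ ∨ x = v₃) ∧ ¬ Go'.Adj none (some x)))
    {A : Matrix V V ℝ} (hA : A ∈ SignedSet Ge Go) (hpsd : A.PosSemidef) :
    ∃ A' ∈ SignedSet Ge' Go', A'.PosSemidef ∧ matNullity A' = matNullity A ∧
      (HasSAP Ge Go A → HasSAP Ge' Go' A') := by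
  classical
  have h₁₂ := hadj12.ne
  have h₁₃ := hadj13.ne
  have h₂₃ := hadj23.ne
  obtain ⟨hAsymm, hAentry⟩ := mem_signedSet_iff.1 hA
  obtain ⟨ha₁₂, hs₁₂⟩ := (hAentry v₁ v₂).ne_zero_and_pos_iff hadj12 hone12
  obtain ⟨ha₁₃, hs₁₃⟩ := (hAentry v₁ v₃).ne_zero_and_pos_iff hadj13 hone13
  obtain ⟨ha₂₃, hs₂₃⟩ := (hAentry v₂ v₃).ne_zero_and_pos_iff hadj23 hone23
  obtain ⟨c, hc, b₁, b₂, b₃, e₁₂, e₁₃, e₂₃, hb₁, hb₂, hb₃⟩ :=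
    exists_deltaY_weights (mul_mul_neg_of_not_xor ha₁₂ ha₁₃ ha₂₃ (by rwa [hs₁₂, hs₁₃, hs₂₃]))
  have hb₁₀ : b₁ ≠ 0 := by rintro rfl; simp [ha₁₂] at e₁₂
  have hb₂₀ : b₂ ≠ 0 := by rintro rfl; simp [ha₁₂] at e₁₂
  have hb₃₀ : b₃ ≠ 0 := by rintro rfl; simp [ha₁₃] at e₁₃
  set b : V → ℝ := Pi.single v₁ b₁ + Pi.single v₂ b₂ + Pi.single v₃ b₃
  have hb_ne := single_add_single_add_single_ne_zero_iff h₁₂ h₁₃ h₂₃ hb₁₀ hb₂₀ hb₃₀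
  have hb_v₁ : b v₁ = b₁ := by simp [b, h₁₂, h₁₃]
  have hb_v₂ : b v₂ = b₂ := by simp [b, h₁₂.symm, h₂₃]
  have hb_v₃ : b v₃ = b₃ := by simp [b, h₁₃.symm, h₂₃.symm]
  have hGo'b : ∀ x, Go'.Adj none (some x) ↔ 0 < b x := by
    intro x
    by_cases hx : x = v₁ ∨ x = v₂ ∨ x = v₃
    · rw [hGo'w]
      rcases hx with rfl | rfl | rfl <;> simp [hb_v₁, hb_v₂, hb_v₃, h₁₂, h₁₃, h₂₃, h₁₂.symm,
        h₁₃.symm, h₂₃.symm, hb₁, hb₂, hb₃, hs₁₂, hs₁₃, hs₂₃, SimpleGraph.adj_comm]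
    · have hbx : b x = 0 := not_not.1 (mt (hb_ne x).1 hx)
      push Not at hx
      simp [hGo'w, hbx, hx]
  have hGe'b : ∀ x, Ge'.Adj none (some x) ↔ b x < 0 := fun x => by
    rw [hGe'w, hGo'b, ← hb_ne, not_lt, and_comm, ← lt_iff_le_and_ne]
  have htri := add_mul_div_eq_zero_on_triangle (v₁ := v₁) (v₂ := v₂) (v₃ := v₃) (b := b) (c := c)
    hAsymm (by rwa [hb_v₁, hb_v₂]) (by rwa [hb_v₁, hb_v₃]) (by rwa [hb_v₂, hb_v₃])
  refine ⟨schurExtension A b c,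
    schurExtension_mem_signedSet hAsymm (fun x => signedEntry_of_adj_iff (hGe'b x) (hGo'b x))
      (signedEntry_some_some_of_cancel hAentry hGe'old hGo'old (fun x hx => ?_) htri),
    schurExtension_posSemidef hpsd hc, matNullity_schurExtension hc.ne',
    fun hsap => hasSAP_schurExtension hc.ne' hsap hGe'old hGo'old (fun x hx => ?_)
      (eq_zero_on_triangle_of_vecMul_eq_zero h₁₂ h₁₃ h₂₃ hb₁₀ hb₂₀ hb₃₀)⟩
  · exact not_not.1 (mt (hb_ne x).1 (by simpa using hx))
  · rw [SimpleGraph.sup_adj, hGe'b, hGo'b]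
    exact ((hb_ne x).2 (by simpa using hx)).lt_or_gt

theorem matNullity_le {V : Type*} [Fintype V] (A : Matrix V V ℝ) :
    matNullity A ≤ Fintype.card V :=
  (Submodule.finrank_le _).trans (Module.finrank_fintype_fun_eq_card ℝ).le

theorem stmt6_general {V : Type*} [Fintype V]
    (Ge Go : SimpleGraph V) (v₁ v₂ v₃ : V)
    (hadj12 : (Ge ⊔ Go).Adj v₁ v₂) (hadj13 : (Ge ⊔ Go).Adj v₁ v₃)
    (hadj23 : (Ge ⊔ Go).Adj v₂ v₃)
    (hone12 : ¬(Ge.Adj v₁ v₂ ∧ Go.Adj v₁ v₂))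
    (hone13 : ¬(Ge.Adj v₁ v₃ ∧ Go.Adj v₁ v₃))
    (hone23 : ¬(Ge.Adj v₂ v₃ ∧ Go.Adj v₂ v₃))
    (heven : ¬ Xor' (Go.Adj v₁ v₂) (Xor' (Go.Adj v₁ v₃) (Go.Adj v₂ v₃)))
    (Ge' Go' : SimpleGraph (Option V))
    (hGe'old : ∀ x y : V, Ge'.Adj (some x) (some y) ↔
      (Ge.Adj x y ∧ ¬(x ∈ ({v₁, v₂, v₃} : Set V) ∧ y ∈ ({v₁, v₂, v₃} : Set V))))
    (hGo'old : ∀ x y : V, Go'.Adj (some x) (some y) ↔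
      (Go.Adj x y ∧ ¬(x ∈ ({v₁, v₂, v₃} : Set V) ∧ y ∈ ({v₁, v₂, v₃} : Set V))))
    (hGo'w : ∀ x : V, Go'.Adj none (some x) ↔
      ((x = v₁ ∧ Go.Adj v₁ v₂ ∧ Go.Adj v₁ v₃) ∨
       (x = v₂ ∧ Go.Adj v₂ v₁ ∧ Go.Adj v₂ v₃) ∨
       (x = v₃ ∧ Go.Adj v₃ v₁ ∧ Go.Adj v₃ v₂)))
    (hGe'w : ∀ x : V, Ge'.Adj none (some x) ↔
      ((x = v₁ ∨ x = v₂ ∨ x = v₃) ∧ ¬ Go'.Adj none (some x))) :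
    MplusSigned Ge Go ≤ MplusSigned Ge' Go' ∧ nuSigned Ge Go ≤ nuSigned Ge' Go' := by
  have key := fun A (hA : A ∈ SignedSet Ge Go) hpsd => exists_deltaY_matrix hadj12 hadj13 hadj23
    hone12 hone13 hone23 heven hGe'old hGo'old hGo'w hGe'w hA hpsd
  refine ⟨csSup_le_csSup' ⟨Fintype.card (Option V), ?_⟩ ?_,
    csSup_le_csSup' ⟨Fintype.card (Option V), ?_⟩ ?_⟩
  · rintro _ ⟨A, -, -, rfl⟩
    exact matNullity_le A
  · rintro _ ⟨A, hA, hpsd, rfl⟩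
    obtain ⟨A', hA', hpsd', hnull, -⟩ := key A hA hpsd
    exact ⟨A', hA', hpsd', hnull⟩
  · rintro _ ⟨A, -, -, -, rfl⟩
    exact matNullity_le A
  · rintro _ ⟨A, hA, hpsd, hsap, rfl⟩
    obtain ⟨A', hA', hpsd', hnull, hsap'⟩ := key A hA hpsd
    exact ⟨A', hA', hpsd', hsap' hsap, hnull⟩

/-- a `ΔY`-transformation on an even triangle does not decrease `M₊` nor `ν`. -/
theorem stmt6 {V : Type*} [Fintype V] [DecidableEq V]
    (Ge Go : SimpleGraph V) (v₁ v₂ v₃ : V)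
    (h12 : v₁ ≠ v₂) (h13 : v₁ ≠ v₃) (h23 : v₂ ≠ v₃)
    (hadj12 : (Ge ⊔ Go).Adj v₁ v₂) (hadj13 : (Ge ⊔ Go).Adj v₁ v₃)
    (hadj23 : (Ge ⊔ Go).Adj v₂ v₃)
    (hone12 : ¬(Ge.Adj v₁ v₂ ∧ Go.Adj v₁ v₂))
    (hone13 : ¬(Ge.Adj v₁ v₃ ∧ Go.Adj v₁ v₃))
    (hone23 : ¬(Ge.Adj v₂ v₃ ∧ Go.Adj v₂ v₃))
    (heven : ¬ Xor' (Go.Adj v₁ v₂) (Xor' (Go.Adj v₁ v₃) (Go.Adj v₂ v₃)))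
    (Ge' Go' : SimpleGraph (Option V))
    (hGe'old : ∀ x y : V, Ge'.Adj (some x) (some y) ↔
      (Ge.Adj x y ∧ ¬(x ∈ ({v₁, v₂, v₃} : Set V) ∧ y ∈ ({v₁, v₂, v₃} : Set V))))
    (hGo'old : ∀ x y : V, Go'.Adj (some x) (some y) ↔
      (Go.Adj x y ∧ ¬(x ∈ ({v₁, v₂, v₃} : Set V) ∧ y ∈ ({v₁, v₂, v₃} : Set V))))
    (hGo'w : ∀ x : V, Go'.Adj none (some x) ↔
      ((x = v₁ ∧ Go.Adj v₁ v₂ ∧ Go.Adj v₁ v₃) ∨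
       (x = v₂ ∧ Go.Adj v₂ v₁ ∧ Go.Adj v₂ v₃) ∨
       (x = v₃ ∧ Go.Adj v₃ v₁ ∧ Go.Adj v₃ v₂)))
    (hGe'w : ∀ x : V, Ge'.Adj none (some x) ↔
      ((x = v₁ ∨ x = v₂ ∨ x = v₃) ∧ ¬ Go'.Adj none (some x))) :
    MplusSigned Ge Go ≤ MplusSigned Ge' Go' ∧ nuSigned Ge Go ≤ nuSigned Ge' Go' :=
  stmt6_general Ge Go v₁ v₂ v₃ hadj12 hadj13 hadj23 hone12 hone13 hone23 heven Ge' Go' hGe'old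
    hGo'old hGo'w hGe'w
end

section
/- Let (Ge, Go) be a signed graph on a finite vertex type V and let v ∈ V be a vertex adjacent to w in both Ge and Go, whose neighbor set in Ge ⊔ Go is exactly {u, w} with u, v, w distinct, and such that v is adjacent to u in exactly one of Ge, Go. Let (Ge₁, Go₁) be the signed graph on V \ {v} (the series-parallel reduction at v, contracting the edge vu) defined by: Ge₁.Adj x y iff Ge.Adj x y or {x, y} = {u, w}, and Go₁.Adj x y iff Go.Adj x y or {x, y} = {u, w}. Then ν(Ge₁, Go₁) = ν(Ge, Go). -/
open Matrix

/-!
Both sides are compared through the Schur complement at `v`. For a positive semidefinite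
`A ∈ S(Ge, Go)`, the entry `A v u` is nonzero, which forces `A v v > 0`; the complement
`B = A[V∖v] − A[·, v] A[v, ·] / A v v` differs from `A` only at entries indexed by `{u, w}`, and
`uw` is a double edge of `(Ge₁, Go₁)`, so `B ∈ S(Ge₁, Go₁)`. Conversely every `B ∈ S(Ge₁, Go₁)` is
the complement of `[[1, rᵀ], [r, B + r rᵀ]]` with `r` supported on `{u, w}`: `r u` carries the sign
of `vu`, and `r w` is free because `vw` is a double edge, so it can give the `(u, w)` entry the sign
that `(Ge, Go)` requires.

Schur complementation preserves nullity and positive semidefiniteness, and it transports the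
Strong Arnold Property both ways. A symmetric `X₁` with `B X₁ = 0` that vanishes on the diagonal
and on the edges of `(Ge₁, Go₁)` lifts, column by column through the kernel isomorphism, to such a
matrix for `A`; its new row vanishes at the neighbours of `v` because they form a clique in
`Ge₁ ⊔ Go₁`. Conversely, such an `X` for `A` has `X u w = 0`, since the `(v, w)` entry of `A X` is
`A v u * X u w`, so its restriction is such a matrix for `B`.
-/

namespace Matrix

variable {V : Type*}

noncomputable def schurAt (A : Matrix V V ℝ) (v : V) : Matrix {x // x ≠ v} {x // x ≠ v} ℝ :=
  of fun x y => A x y - A x v * A v y / A v v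

@[simp] lemma schurAt_apply (A : Matrix V V ℝ) (v : V) (x y : {x // x ≠ v}) :
    A.schurAt v x y = A x y - A x v * A v y / A v v := rfl

lemma IsSymm.schurAt {A : Matrix V V ℝ} {v : V} (hA : A.IsSymm) : (A.schurAt v).IsSymm := by
  ext x y
  simp only [transpose_apply, schurAt_apply, hA.apply]
  ring

variable [Fintype V] [DecidableEq V]

/-- The extension of `z` to `V` whose image under `A` vanishes at `v`. -/
noncomputable def schurLift (A : Matrix V V ℝ) (v : V) (z : {x // x ≠ v} → ℝ) : V → ℝ :=
  fun x => if h : x = v then -(∑ y : {x // x ≠ v}, A v y * z y) / A v v else z ⟨x, h⟩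

variable {A : Matrix V V ℝ} {v : V}

@[simp] lemma schurLift_apply_coe (z : {x // x ≠ v} → ℝ) (x : {x // x ≠ v}) :
    A.schurLift v z x = z x := by
  simp [schurLift, x.2]

lemma schurLift_apply_self (z : {x // x ≠ v} → ℝ) :
    A.schurLift v z v = -(∑ y : {x // x ≠ v}, A v y * z y) / A v v := by
  simp [schurLift]

@[simp] lemma schurLift_zero : A.schurLift v 0 = 0 := by
  ext x
  simp [schurLift]

lemma mulVec_apply_eq_add_sum (z : V → ℝ) :
    (A *ᵥ z) v = A v v * z v + ∑ y : {y // y ≠ v}, A v y * z y := by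
  rw [mulVec, dotProduct, Fintype.sum_eq_add_sum_subtype_ne _ v]

lemma mulVec_apply_coe (hs : A v v ≠ 0) (z : V → ℝ) (x : {x // x ≠ v}) :
    (A *ᵥ z) x = (A.schurAt v *ᵥ fun y => z y) x + A x v / A v v * (A *ᵥ z) v := by
  rw [mulVec_apply_eq_add_sum (v := v), mulVec, dotProduct, Fintype.sum_eq_add_sum_subtype_ne _ v,
    mulVec, dotProduct]
  have h (y : {y // y ≠ v}) : A x v / A v v * (A v y * z y) = A x v * A v y / A v v * z y := by
    ring
  simp only [schurAt_apply, sub_mul, Finset.sum_sub_distrib, mul_add, Finset.mul_sum, h]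
  field_simp
  ring

lemma mulVec_schurLift_apply_self (hs : A v v ≠ 0) (z : {x // x ≠ v} → ℝ) :
    (A *ᵥ A.schurLift v z) v = 0 := by
  rw [mulVec_apply_eq_add_sum, schurLift_apply_self]
  simp only [schurLift_apply_coe]
  field_simp
  ring

lemma schurAt_mulVec_eq_zero (hs : A v v ≠ 0) {z : V → ℝ} (hz : A *ᵥ z = 0) :
    A.schurAt v *ᵥ (fun x => z x) = 0 := by
  ext x
  simpa [hz] using (mulVec_apply_coe hs z x).symm

lemma mulVec_schurLift_eq_zero (hs : A v v ≠ 0) {z : {x // x ≠ v} → ℝ}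
    (hz : A.schurAt v *ᵥ z = 0) : A *ᵥ A.schurLift v z = 0 := by
  ext x
  by_cases hx : x = v
  · rw [hx]; exact mulVec_schurLift_apply_self hs z
  · have := mulVec_apply_coe hs (A.schurLift v z) ⟨x, hx⟩
    simpa [mulVec_schurLift_apply_self hs, hz] using this

lemma schurLift_restrict (hs : A v v ≠ 0) {z : V → ℝ} (hz : A *ᵥ z = 0) :
    A.schurLift v (fun x => z x) = z := by
  ext x
  by_cases hx : x = v
  · have := mulVec_apply_eq_add_sum (A := A) (v := v) z
    rw [hz, Pi.zero_apply] at this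
    rw [hx, schurLift_apply_self]
    field_simp
    linarith
  · exact schurLift_apply_coe (v := v) _ ⟨x, hx⟩

lemma matNullity_schurAt (hs : A v v ≠ 0) : matNullity (A.schurAt v) = matNullity A := by
  let e : LinearMap.ker A.mulVecLin ≃ₗ[ℝ] LinearMap.ker (A.schurAt v).mulVecLin :=
    { toFun := fun z => ⟨fun x => z.1 x, schurAt_mulVec_eq_zero hs z.2⟩
      invFun := fun z => ⟨A.schurLift v z.1, mulVec_schurLift_eq_zero hs z.2⟩
      map_add' := fun _ _ => rfl
      map_smul' := fun _ _ => rfl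
      left_inv := fun z => Subtype.ext (schurLift_restrict hs z.2)
      right_inv := fun z => Subtype.ext (funext (schurLift_apply_coe z.1)) }
  exact e.finrank_eq.symm

lemma dotProduct_mulVec_eq_schurAt (hA : A.IsSymm) (hs : A v v ≠ 0) (z : V → ℝ) :
    z ⬝ᵥ (A *ᵥ z) =
      (fun x : {x // x ≠ v} => z x) ⬝ᵥ (A.schurAt v *ᵥ fun x => z x) + (A *ᵥ z) v ^ 2 / A v v := by
  have hcol : ∑ x : {x // x ≠ v}, z x * (A x v / A v v * (A *ᵥ z) v) =
      ((A *ᵥ z) v - A v v * z v) * (A *ᵥ z) v / A v v := by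
    rw [mulVec_apply_eq_add_sum (v := v), add_sub_cancel_left, Finset.sum_mul, Finset.sum_div]
    refine Finset.sum_congr rfl fun x _ => ?_
    rw [hA.apply x v]
    ring
  rw [dotProduct, Fintype.sum_eq_add_sum_subtype_ne _ v]
  simp only [mulVec_apply_coe hs, mul_add, Finset.sum_add_distrib, hcol]
  rw [dotProduct]
  field_simp
  ring

lemma posSemidef_schurAt_iff (hA : A.IsSymm) (hs : 0 < A v v) :
    (A.schurAt v).PosSemidef ↔ A.PosSemidef := by
  constructor
  · refine fun h => .of_dotProduct_mulVec_nonneg (isHermitian_iff_isSymm.2 hA) fun z => ?_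
    rw [star_trivial, dotProduct_mulVec_eq_schurAt hA hs.ne']
    have := h.dotProduct_mulVec_nonneg fun x => z x
    rw [star_trivial] at this
    positivity
  · refine fun h => .of_dotProduct_mulVec_nonneg
      (isHermitian_iff_isSymm.2 hA.schurAt) fun z => ?_
    have := h.dotProduct_mulVec_nonneg (A.schurLift v z)
    rw [star_trivial, dotProduct_mulVec_eq_schurAt hA hs.ne', mulVec_schurLift_apply_self hs.ne']
      at this
    simpa using this

end Matrix

open scoped ComplexOrder in
lemma Matrix.PosSemidef.apply_eq_zero_of_apply_self_eq_zero {n 𝕜 : Type*} [Fintype n]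
    [DecidableEq n] [RCLike 𝕜] {A : Matrix n n 𝕜} (hA : A.PosSemidef) {v : n} (h : A v v = 0)
    (u : n) : A u v = 0 := by
  have := (hA.dotProduct_mulVec_zero_iff (Pi.single v 1)).1 (by simp [h])
  simpa using congrFun this u

namespace Matrix

variable {V α : Type*} [DecidableEq V] (v : V)

def bordered (M : Matrix {x // x ≠ v} {x // x ≠ v} α) (r : {x // x ≠ v} → α) (d : α) :
    Matrix V V α :=
  of fun x y =>
    if hx : x = v then (if hy : y = v then d else r ⟨y, hy⟩)
    else if hy : y = v then r ⟨x, hx⟩ else M ⟨x, hx⟩ ⟨y, hy⟩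

variable {v} (M : Matrix {x // x ≠ v} {x // x ≠ v} α) (r : {x // x ≠ v} → α) (d : α)

@[simp] lemma bordered_apply_self_self : bordered v M r d v v = d := by simp [bordered]

@[simp] lemma bordered_apply_self_coe (y : {x // x ≠ v}) : bordered v M r d v y = r y := by
  simp [bordered, y.2]

@[simp] lemma bordered_apply_coe_self (x : {x // x ≠ v}) : bordered v M r d x v = r x := by
  simp [bordered, x.2]

@[simp] lemma bordered_apply_coe_coe (x y : {x // x ≠ v}) : bordered v M r d x y = M x y := by
  simp [bordered, x.2, y.2]

variable {M}

lemma IsSymm.bordered (hM : M.IsSymm) : (bordered v M r d).IsSymm := by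
  ext x y
  by_cases hx : x = v <;> by_cases hy : y = v <;>
    simp [Matrix.bordered, hx, hy, hM.apply]

end Matrix

section SignCompatible

variable {V : Type*} {Ge Go : SimpleGraph V} {i j : V} {r : ℝ}

/-- The sign condition that `S(Ge, Go)` imposes on the `(i, j)` entry. -/
def SignCompatible (Ge Go : SimpleGraph V) (i j : V) (r : ℝ) : Prop :=
  ((Ge.Adj i j ∧ ¬ Go.Adj i j) → r < 0) ∧
    ((Go.Adj i j ∧ ¬ Ge.Adj i j) → 0 < r) ∧
    ((i ≠ j ∧ ¬ Ge.Adj i j ∧ ¬ Go.Adj i j) → r = 0)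

namespace SignCompatible

lemma symm (h : SignCompatible Ge Go i j r) : SignCompatible Ge Go j i r :=
  ⟨fun h' => h.1 ⟨h'.1.symm, fun h'' => h'.2 h''.symm⟩,
    fun h' => h.2.1 ⟨h'.1.symm, fun h'' => h'.2 h''.symm⟩,
    fun h' => h.2.2 ⟨Ne.symm h'.1, fun h'' => h'.2.1 h''.symm, fun h'' => h'.2.2 h''.symm⟩⟩

lemma self : SignCompatible Ge Go i i r :=
  ⟨fun h => absurd h.1 (Ge.irrefl), fun h => absurd h.1 (Go.irrefl), fun h => absurd rfl h.1⟩

lemma of_adj_of_adj (he : Ge.Adj i j) (ho : Go.Adj i j) : SignCompatible Ge Go i j r :=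
  ⟨fun h => absurd ho h.2, fun h => absurd he h.2, fun h => absurd he h.2.1⟩

lemma zero_of_not_adj (h : ¬(Ge ⊔ Go).Adj i j) : SignCompatible Ge Go i j 0 := by
  simp only [SimpleGraph.sup_adj, not_or] at h
  exact ⟨fun h' => absurd h'.1 h.1, fun h' => absurd h'.1 h.2, fun _ => rfl⟩

lemma eq_zero (h : SignCompatible Ge Go i j r) (hij : i ≠ j) (hn : ¬(Ge ⊔ Go).Adj i j) :
    r = 0 := by
  simp only [SimpleGraph.sup_adj, not_or] at hn
  exact h.2.2 ⟨hij, hn⟩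

lemma ne_zero (h : SignCompatible Ge Go i j r) (hadj : (Ge ⊔ Go).Adj i j)
    (hnb : ¬(Ge.Adj i j ∧ Go.Adj i j)) : r ≠ 0 := by
  rcases hadj with he | ho
  · exact (h.1 ⟨he, fun ho => hnb ⟨he, ho⟩⟩).ne
  · exact (h.2.1 ⟨ho, fun he => hnb ⟨he, ho⟩⟩).ne'

end SignCompatible

lemma exists_signCompatible (Ge Go : SimpleGraph V) (i j : V) :
    ∃ r, SignCompatible Ge Go i j r := by
  by_cases he : Ge.Adj i j <;> by_cases ho : Go.Adj i j
  · exact ⟨0, .of_adj_of_adj he ho⟩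
  · exact ⟨-1, fun _ => by norm_num, fun h => absurd he h.2, fun h => absurd he h.2.1⟩
  · exact ⟨1, fun h => absurd ho h.2, fun _ => by norm_num, fun h => absurd ho h.2.2⟩
  · exact ⟨0, .zero_of_not_adj (by simp [he, ho])⟩

lemma signCompatible_congr {W : Type*} {Ge' Go' : SimpleGraph W} {i' j' : W}
    (hne : i ≠ j ↔ i' ≠ j') (he : Ge.Adj i j ↔ Ge'.Adj i' j') (ho : Go.Adj i j ↔ Go'.Adj i' j') :
    SignCompatible Ge Go i j r ↔ SignCompatible Ge' Go' i' j' r := by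
  simp only [SignCompatible, hne, he, ho]

end SignCompatible

namespace Matrix

variable {V : Type*} [DecidableEq V] {v : V}

lemma schurAt_bordered (B : Matrix {x // x ≠ v} {x // x ≠ v} ℝ) (r : {x // x ≠ v} → ℝ) :
    (bordered v (B + vecMulVec r r) r 1).schurAt v = B := by
  ext x y
  simp [vecMulVec_apply]

lemma bordered_mem_signedSet {Ge Go : SimpleGraph V} {M : Matrix {x // x ≠ v} {x // x ≠ v} ℝ}
    {r : {x // x ≠ v} → ℝ} (d : ℝ) (hM : M.IsSymm)
    (hr : ∀ y : {x // x ≠ v}, SignCompatible Ge Go v y (r y))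
    (hM' : ∀ x y : {x // x ≠ v}, SignCompatible Ge Go x y (M x y)) :
    bordered v M r d ∈ SignedSet Ge Go := by
  refine ⟨hM.bordered r d, fun i j => ?_⟩
  change SignCompatible Ge Go i j _
  by_cases hi : i = v <;> by_cases hj : j = v
  · rw [hi, hj]; exact .self
  · lift j to {x // x ≠ v} using hj
    rw [hi, bordered_apply_self_coe]; exact hr j
  · lift i to {x // x ≠ v} using hi
    rw [hj, bordered_apply_coe_self]; exact (hr i).symm
  · lift i to {x // x ≠ v} using hi
    lift j to {x // x ≠ v} using hj
    rw [bordered_apply_coe_coe]; exact hM' i j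

lemma bordered_apply_eq_zero {Ge Go : SimpleGraph V} {Ge₁ Go₁ : SimpleGraph {x // x ≠ v}}
    (hdel : ∀ x y : {x // x ≠ v}, (Ge ⊔ Go).Adj x y → (Ge₁ ⊔ Go₁).Adj x y)
    {M : Matrix {x // x ≠ v} {x // x ≠ v} ℝ}
    (hM : ∀ x y, (x = y ∨ (Ge₁ ⊔ Go₁).Adj x y) → M x y = 0)
    {r : {x // x ≠ v} → ℝ} (hr : ∀ y : {x // x ≠ v}, (Ge ⊔ Go).Adj v y → r y = 0)
    (i j : V) (hij : i = j ∨ (Ge ⊔ Go).Adj i j) : bordered v M r 0 i j = 0 := by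
  by_cases hi : i = v <;> by_cases hj : j = v
  · rw [hi, hj, bordered_apply_self_self]
  · lift j to {x // x ≠ v} using hj
    rw [hi] at hij ⊢
    rw [bordered_apply_self_coe]
    exact hr j (hij.resolve_left (Ne.symm j.2))
  · lift i to {x // x ≠ v} using hi
    rw [hj] at hij ⊢
    rw [bordered_apply_coe_self]
    exact hr i (hij.resolve_left i.2).symm
  · lift i to {x // x ≠ v} using hi
    lift j to {x // x ≠ v} using hj
    rw [bordered_apply_coe_coe]
    exact hM i j (hij.imp Subtype.ext (hdel i j))

end Matrix

section SAP

variable {V : Type*} [Fintype V] [DecidableEq V] {A : Matrix V V ℝ} {v : V}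

lemma mul_bordered_schurLift_eq_zero (hs : A v v ≠ 0) {X₁ : Matrix {x // x ≠ v} {x // x ≠ v} ℝ}
    (hX₁ : X₁.IsSymm) (hmul : A.schurAt v * X₁ = 0)
    (horth : ∀ t : {x // x ≠ v}, A v t * A.schurLift v (X₁ᵀ t) v = 0) :
    A * bordered v X₁ (fun y => A.schurLift v (X₁ᵀ y) v) 0 = 0 := by
  set X := bordered v X₁ (fun y => A.schurLift v (X₁ᵀ y) v) 0
  have hcol (y : {x // x ≠ v}) : Xᵀ y = A.schurLift v (X₁ᵀ y) := by
    ext t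
    by_cases ht : t = v
    · rw [ht]; simp [X]
    · lift t to {x // x ≠ v} using ht
      simp [X]
  have hker (y : {x // x ≠ v}) : A *ᵥ Xᵀ y = 0 := by
    rw [hcol]
    exact mulVec_schurLift_eq_zero hs (funext fun x => congrFun (congrFun hmul x) y)
  have hcolv : Xᵀ v = ∑ t : {x // x ≠ v}, (-(A v t / A v v)) • Xᵀ t := by
    ext s
    rw [Finset.sum_apply]
    by_cases hs' : s = v
    · rw [hs']
      simp only [transpose_apply, bordered_apply_self_self, bordered_apply_self_coe, Pi.smul_apply,
        smul_eq_mul, X]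
      refine (Finset.sum_eq_zero fun t _ => ?_).symm
      rw [neg_mul, div_mul_eq_mul_div, horth, zero_div, neg_zero]
    · lift s to {x // x ≠ v} using hs'
      simp only [transpose_apply, bordered_apply_coe_self, bordered_apply_coe_coe, Pi.smul_apply,
        smul_eq_mul, X, schurLift_apply_self, hX₁.apply s]
      rw [neg_div, Finset.sum_div, ← Finset.sum_neg_distrib]
      exact Finset.sum_congr rfl fun t _ => by ring
  ext x y
  by_cases hy : y = v
  · show (A *ᵥ Xᵀ y) x = 0
    rw [hy, hcolv, mulVec_sum]
    simp only [mulVec_smul, hker, smul_zero, Finset.sum_const_zero, Pi.zero_apply]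
  · exact congrFun (hker ⟨y, hy⟩) x

variable {Ge Go : SimpleGraph V} {Ge₁ Go₁ : SimpleGraph {x // x ≠ v}}

lemma HasSAP.schurAt (hA : A ∈ SignedSet Ge Go) (hs : A v v ≠ 0)
    (hdel : ∀ x y : {x // x ≠ v}, (Ge ⊔ Go).Adj x y → (Ge₁ ⊔ Go₁).Adj x y)
    (hjoin : ∀ x y : {x // x ≠ v}, x ≠ y → (Ge ⊔ Go).Adj v x → (Ge ⊔ Go).Adj v y →
      (Ge₁ ⊔ Go₁).Adj x y)
    (hSAP : HasSAP Ge Go A) : HasSAP Ge₁ Go₁ (A.schurAt v) := by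
  intro X₁ hX₁ hpat₁ hmul
  set r := fun y : {x // x ≠ v} => A.schurLift v (X₁ᵀ y) v
  have hAv (t : {x // x ≠ v}) (ht : ¬(Ge ⊔ Go).Adj v t) : A v t = 0 :=
    SignCompatible.eq_zero (hA.2 v t) (Ne.symm t.2) ht
  have hr (y : {x // x ≠ v}) (hy : (Ge ⊔ Go).Adj v y) : r y = 0 := by
    simp only [r, schurLift_apply_self, transpose_apply]
    rw [Finset.sum_eq_zero fun t _ => ?_, neg_zero, zero_div]
    by_cases ht : (Ge ⊔ Go).Adj v t
    · by_cases hty : t = y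
      · rw [hpat₁ t y (Or.inl hty), mul_zero]
      · rw [hpat₁ t y (Or.inr (hjoin t y hty ht hy)), mul_zero]
    · rw [hAv t ht, zero_mul]
  have horth (t : {x // x ≠ v}) : A v t * r t = 0 := by
    by_cases ht : (Ge ⊔ Go).Adj v t
    · rw [hr t ht, mul_zero]
    · rw [hAv t ht, zero_mul]
  have hX := hSAP _ (hX₁.bordered r 0) (bordered_apply_eq_zero hdel hpat₁ hr)
    (mul_bordered_schurLift_eq_zero hs hX₁ hmul horth)
  ext x y
  simpa using congrFun (congrFun hX x) y

lemma HasSAP.of_schurAt (hs : A v v ≠ 0) (hSAP : HasSAP Ge₁ Go₁ (A.schurAt v))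
    (hnew : ∀ X : Matrix V V ℝ, X.IsSymm → (∀ i j, (i = j ∨ (Ge ⊔ Go).Adj i j) → X i j = 0) →
      A * X = 0 → ∀ x y : {x // x ≠ v}, (Ge₁ ⊔ Go₁).Adj x y → X x y = 0) :
    HasSAP Ge Go A := by
  intro X hX hpat hmul
  have hker (y : V) : A *ᵥ Xᵀ y = 0 := funext fun x => congrFun (congrFun hmul x) y
  have hX₁ : X.submatrix (↑) (↑) = (0 : Matrix {x // x ≠ v} {x // x ≠ v} ℝ) := by
    refine hSAP _ (hX.submatrix _) (fun i j hij => ?_) ?_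
    · rcases hij with h | h
      · exact hpat i j (Or.inl (congrArg _ h))
      · exact hnew X hX hpat hmul i j h
    · ext x y
      exact congrFun (schurAt_mulVec_eq_zero hs (hker y)) x
  have hcol (y : {x // x ≠ v}) : Xᵀ y = 0 := by
    have hrestrict : (fun x : {x // x ≠ v} => Xᵀ y x) = 0 :=
      funext fun x => congrFun (congrFun hX₁ x) y
    rw [← schurLift_restrict hs (hker y), hrestrict, schurLift_zero]
  ext x y
  by_cases hy : y = v
  · by_cases hx : x = v
    · exact hpat x y (Or.inl (hx.trans hy.symm))
    · rw [hy, ← hX.apply]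
      exact congrFun (hcol ⟨x, hx⟩) v
  · exact congrFun (hcol ⟨y, hy⟩) x

end SAP

lemma Sym2.notMem_or_notMem {α : Type*} {x y u w : α} (hxy : x ≠ y) (h : s(x, y) ≠ s(u, w)) :
    x ∉ s(u, w) ∨ y ∉ s(u, w) := by
  by_contra! hmem
  rw [Sym2.mem_iff, Sym2.mem_iff] at hmem
  rw [Ne, Sym2.eq_iff] at h
  obtain ⟨rfl | rfl, rfl | rfl⟩ := hmem <;> tauto

section SeriesParallel

variable {V : Type*}

/-- `(Ge₁, Go₁)` is the series-parallel reduction of `(Ge, Go)` at `v`: the neighbours of `v` are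
`u`, joined by a single-signed edge, and `w`, joined by edges of both signs; contracting `vu`
turns them into a double edge `uw`. -/
structure IsSeriesParallelReduction (Ge Go : SimpleGraph V) (v u w : V)
    (Ge₁ Go₁ : SimpleGraph {x // x ≠ v}) : Prop where
  adj_even_vw : Ge.Adj v w
  adj_odd_vw : Go.Adj v w
  sup_adj_iff : ∀ x, (Ge ⊔ Go).Adj v x ↔ (x = u ∨ x = w)
  not_adj_both_vu : ¬(Ge.Adj v u ∧ Go.Adj v u)
  adj_even_iff : ∀ x y : {x : V // x ≠ v}, Ge₁.Adj x y ↔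
    (Ge.Adj (x : V) (y : V) ∨ (((x : V) = u ∧ (y : V) = w) ∨ ((x : V) = w ∧ (y : V) = u)))
  adj_odd_iff : ∀ x y : {x : V // x ≠ v}, Go₁.Adj x y ↔
    (Go.Adj (x : V) (y : V) ∨ (((x : V) = u ∧ (y : V) = w) ∨ ((x : V) = w ∧ (y : V) = u)))

namespace IsSeriesParallelReduction

variable {Ge Go : SimpleGraph V} {v u w : V} {Ge₁ Go₁ : SimpleGraph {x // x ≠ v}}

lemma sup_adj_vu (hR : IsSeriesParallelReduction Ge Go v u w Ge₁ Go₁) :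
    (Ge ⊔ Go).Adj v u := (hR.sup_adj_iff u).2 (Or.inl rfl)

lemma ne_uv (hR : IsSeriesParallelReduction Ge Go v u w Ge₁ Go₁) :
    u ≠ v := hR.sup_adj_vu.ne'

lemma ne_wv (hR : IsSeriesParallelReduction Ge Go v u w Ge₁ Go₁) :
    w ≠ v := hR.adj_even_vw.ne'

lemma ne_uw (hR : IsSeriesParallelReduction Ge Go v u w Ge₁ Go₁) :
    u ≠ w := fun h => hR.not_adj_both_vu (h ▸ ⟨hR.adj_even_vw, hR.adj_odd_vw⟩)

lemma sup_adj₁_iff (hR : IsSeriesParallelReduction Ge Go v u w Ge₁ Go₁)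
    (x y : {x // x ≠ v}) :
    (Ge₁ ⊔ Go₁).Adj x y ↔ (Ge ⊔ Go).Adj x y ∨ s((x : V), y) = s(u, w) := by
  simp only [SimpleGraph.sup_adj, hR.adj_even_iff, hR.adj_odd_iff, Sym2.eq_iff]
  tauto

lemma signCompatible₁_of_eq (hR : IsSeriesParallelReduction Ge Go v u w Ge₁ Go₁)
    {x y : {x // x ≠ v}} (h : s((x : V), y) = s(u, w)) (r : ℝ) :
    SignCompatible Ge₁ Go₁ x y r :=
  .of_adj_of_adj ((hR.adj_even_iff x y).2 (Or.inr (Sym2.eq_iff.1 h)))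
    ((hR.adj_odd_iff x y).2 (Or.inr (Sym2.eq_iff.1 h)))

lemma signCompatible₁_iff (hR : IsSeriesParallelReduction Ge Go v u w Ge₁ Go₁)
    {x y : {x // x ≠ v}} (h : s((x : V), y) ≠ s(u, w)) (r : ℝ) :
    SignCompatible Ge₁ Go₁ x y r ↔ SignCompatible Ge Go x y r := by
  rw [Ne, Sym2.eq_iff] at h
  refine signCompatible_congr Subtype.coe_ne_coe.symm ?_ ?_
  · rw [hR.adj_even_iff]; tauto
  · rw [hR.adj_odd_iff]; tauto

variable {A : Matrix V V ℝ}

lemma apply_vu_ne_zero (hR : IsSeriesParallelReduction Ge Go v u w Ge₁ Go₁)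
    (hA : A ∈ SignedSet Ge Go) : A v u ≠ 0 :=
  SignCompatible.ne_zero (hA.2 v u) hR.sup_adj_vu hR.not_adj_both_vu

lemma apply_v_eq_zero (hR : IsSeriesParallelReduction Ge Go v u w Ge₁ Go₁)
    (hA : A ∈ SignedSet Ge Go) {x : V} (hxv : x ≠ v) (hx : x ∉ s(u, w)) : A v x = 0 :=
  SignCompatible.eq_zero (hA.2 v x) hxv.symm (by rwa [hR.sup_adj_iff, ← Sym2.mem_iff])

variable [DecidableEq V]

lemma schurAt_mem_signedSet (hR : IsSeriesParallelReduction Ge Go v u w Ge₁ Go₁)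
    (hA : A ∈ SignedSet Ge Go) : A.schurAt v ∈ SignedSet Ge₁ Go₁ := by
  refine ⟨hA.1.schurAt, fun x y => ?_⟩
  change SignCompatible Ge₁ Go₁ x y _
  by_cases hxy : x = y
  · rw [hxy]; exact .self
  by_cases hp : s((x : V), y) = s(u, w)
  · exact hR.signCompatible₁_of_eq hp _
  have hzero : A x v * A v y = 0 := by
    rcases Sym2.notMem_or_notMem (Subtype.coe_ne_coe.2 hxy) hp with hx | hy
    · rw [hA.1.apply, hR.apply_v_eq_zero hA x.2 hx, zero_mul]
    · rw [hR.apply_v_eq_zero hA y.2 hy, mul_zero]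
  rw [hR.signCompatible₁_iff hp, schurAt_apply, hzero, zero_div, sub_zero]
  exact hA.2 x y

lemma bordered_mem_signedSet (hR : IsSeriesParallelReduction Ge Go v u w Ge₁ Go₁)
    {B : Matrix {x // x ≠ v} {x // x ≠ v} ℝ} (hB : B ∈ SignedSet Ge₁ Go₁)
    {r : {x // x ≠ v} → ℝ} (d : ℝ) (hru : SignCompatible Ge Go v u (r ⟨u, hR.ne_uv⟩))
    (hr : ∀ y : {x // x ≠ v}, (y : V) ∉ s(u, w) → r y = 0)
    (huw : SignCompatible Ge Go u w
      (B ⟨u, hR.ne_uv⟩ ⟨w, hR.ne_wv⟩ + r ⟨u, hR.ne_uv⟩ * r ⟨w, hR.ne_wv⟩)) :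
    bordered v (B + vecMulVec r r) r d ∈ SignedSet Ge Go := by
  refine Matrix.bordered_mem_signedSet d (hB.1.add (transpose_vecMulVec r r)) (fun y => ?_)
    fun x y => ?_
  · by_cases hyu : (y : V) = u
    · obtain rfl : y = ⟨u, hR.ne_uv⟩ := Subtype.ext hyu
      exact hru
    by_cases hyw : (y : V) = w
    · rw [hyw]; exact .of_adj_of_adj hR.adj_even_vw hR.adj_odd_vw
    · rw [hr y (by simp [hyu, hyw])]
      exact .zero_of_not_adj (by rw [hR.sup_adj_iff]; tauto)
  by_cases hxy : x = y
  · rw [hxy]; exact .self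
  by_cases hp : s((x : V), y) = s(u, w)
  · rw [Sym2.eq_iff] at hp
    rcases hp with ⟨hx, hy⟩ | ⟨hx, hy⟩
    · obtain rfl : x = ⟨u, hR.ne_uv⟩ := Subtype.ext hx
      obtain rfl : y = ⟨w, hR.ne_wv⟩ := Subtype.ext hy
      exact huw
    · obtain rfl : x = ⟨w, hR.ne_wv⟩ := Subtype.ext hx
      obtain rfl : y = ⟨u, hR.ne_uv⟩ := Subtype.ext hy
      rw [Matrix.add_apply, vecMulVec_apply, hB.1.apply, mul_comm]
      exact huw.symm
  have hzero : r x * r y = 0 := by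
    rcases Sym2.notMem_or_notMem (Subtype.coe_ne_coe.2 hxy) hp with hx | hy
    · rw [hr x hx, zero_mul]
    · rw [hr y hy, mul_zero]
  rw [Matrix.add_apply, vecMulVec_apply, hzero, add_zero, ← hR.signCompatible₁_iff hp]
  exact hB.2 x y

variable [Fintype V]

lemma apply_uw_eq_zero (hR : IsSeriesParallelReduction Ge Go v u w Ge₁ Go₁)
    (hA : A ∈ SignedSet Ge Go) {X : Matrix V V ℝ}
    (hpat : ∀ i j, (i = j ∨ (Ge ⊔ Go).Adj i j) → X i j = 0) (hmul : A * X = 0) : X u w = 0 := by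
  have hvw : (A * X) v w = A v u * X u w := by
    rw [mul_apply]
    refine Fintype.sum_eq_single u fun t htu => ?_
    by_cases htv : t = v
    · rw [htv, hpat v w (Or.inr (Or.inl hR.adj_even_vw)), mul_zero]
    by_cases htw : t = w
    · rw [htw, hpat w w (Or.inl rfl), mul_zero]
    · rw [hR.apply_v_eq_zero hA htv (by rw [Sym2.mem_iff]; tauto), zero_mul]
  rw [hmul, Matrix.zero_apply, eq_comm, mul_eq_zero] at hvw
  exact hvw.resolve_left (hR.apply_vu_ne_zero hA)

lemma apply_eq_zero_of_sup_adj₁ (hR : IsSeriesParallelReduction Ge Go v u w Ge₁ Go₁)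
    (hA : A ∈ SignedSet Ge Go) {X : Matrix V V ℝ} (hX : X.IsSymm)
    (hpat : ∀ i j, (i = j ∨ (Ge ⊔ Go).Adj i j) → X i j = 0) (hmul : A * X = 0)
    (x y : {x // x ≠ v}) (hxy : (Ge₁ ⊔ Go₁).Adj x y) : X x y = 0 := by
  rcases (hR.sup_adj₁_iff x y).1 hxy with h | h
  · exact hpat x y (Or.inr h)
  rcases Sym2.eq_iff.1 h with ⟨hx, hy⟩ | ⟨hx, hy⟩
  · rw [hx, hy]; exact hR.apply_uw_eq_zero hA hpat hmul
  · rw [hx, hy, hX.apply]; exact hR.apply_uw_eq_zero hA hpat hmul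

lemma exists_reduced (hR : IsSeriesParallelReduction Ge Go v u w Ge₁ Go₁)
    (hA : A ∈ SignedSet Ge Go) (hpsd : A.PosSemidef) (hsap : HasSAP Ge Go A) :
    ∃ B ∈ SignedSet Ge₁ Go₁, B.PosSemidef ∧ HasSAP Ge₁ Go₁ B ∧ matNullity B = matNullity A := by
  have hs : 0 < A v v := by
    refine hpsd.diag_nonneg.lt_of_ne fun h => hR.apply_vu_ne_zero hA ?_
    rw [← hA.1.apply]
    exact hpsd.apply_eq_zero_of_apply_self_eq_zero h.symm u
  have hjoin (x y : {x // x ≠ v}) (hxy : x ≠ y) (hx : (Ge ⊔ Go).Adj v x)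
      (hy : (Ge ⊔ Go).Adj v y) : (Ge₁ ⊔ Go₁).Adj x y := by
    rw [hR.sup_adj_iff, ← Sym2.mem_iff] at hx hy
    refine (hR.sup_adj₁_iff x y).2 (Or.inr ?_)
    by_contra hp
    rcases Sym2.notMem_or_notMem (Subtype.coe_ne_coe.2 hxy) hp with h | h <;> contradiction
  exact ⟨A.schurAt v, hR.schurAt_mem_signedSet hA, (posSemidef_schurAt_iff hA.1 hs).2 hpsd,
    hsap.schurAt hA hs.ne' (fun x y h => (hR.sup_adj₁_iff x y).2 (Or.inl h)) hjoin,
    matNullity_schurAt hs.ne'⟩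

lemma exists_of_reduced (hR : IsSeriesParallelReduction Ge Go v u w Ge₁ Go₁)
    {B : Matrix {x // x ≠ v} {x // x ≠ v} ℝ} (hB : B ∈ SignedSet Ge₁ Go₁) (hpsd : B.PosSemidef)
    (hsap : HasSAP Ge₁ Go₁ B) :
    ∃ A ∈ SignedSet Ge Go, A.PosSemidef ∧ HasSAP Ge Go A ∧ matNullity A = matNullity B := by
  obtain ⟨a, ha⟩ := exists_signCompatible Ge Go v u
  obtain ⟨c, hc⟩ := exists_signCompatible Ge Go u w
  have ha0 : a ≠ 0 := ha.ne_zero hR.sup_adj_vu hR.not_adj_both_vu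
  -- the border entry `b` at `w` is free (`vw` is a double edge) and makes the `(u, w)` entry `c`
  set b := (c - B ⟨u, hR.ne_uv⟩ ⟨w, hR.ne_wv⟩) / a
  set r : {x // x ≠ v} → ℝ := fun y => if (y : V) = u then a else if (y : V) = w then b else 0
  set A := bordered v (B + vecMulVec r r) r 1
  have hA : A ∈ SignedSet Ge Go := by
    refine hR.bordered_mem_signedSet hB 1 (by simpa [r] using ha) (fun y hy => ?_) ?_
    · rw [Sym2.mem_iff, not_or] at hy
      simp [r, hy.1, hy.2]
    · convert hc using 1
      simp only [r, b, if_pos, if_neg hR.ne_uw.symm]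
      field_simp
      ring
  have hschur : A.schurAt v = B := schurAt_bordered B r
  have hs : 0 < A v v := by simp [A]
  refine ⟨A, hA, (posSemidef_schurAt_iff hA.1 hs).1 (hschur ▸ hpsd),
    .of_schurAt hs.ne' (hschur ▸ hsap) fun _ => hR.apply_eq_zero_of_sup_adj₁ hA, ?_⟩
  rw [← matNullity_schurAt hs.ne', hschur]

end IsSeriesParallelReduction

end SeriesParallel

theorem stmt8_general {V : Type*} [Fintype V] [DecidableEq V]
    (Ge Go : SimpleGraph V) (v u w : V)
    (hbothE : Ge.Adj v w) (hbothO : Go.Adj v w)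
    (hnbr : ∀ x, (Ge ⊔ Go).Adj v x ↔ (x = u ∨ x = w))
    (honeu : ¬(Ge.Adj v u ∧ Go.Adj v u))
    (Ge₁ Go₁ : SimpleGraph {x : V // x ≠ v})
    (hGe₁ : ∀ x y : {x : V // x ≠ v}, Ge₁.Adj x y ↔
      (Ge.Adj (x : V) (y : V) ∨
        (((x : V) = u ∧ (y : V) = w) ∨ ((x : V) = w ∧ (y : V) = u))))
    (hGo₁ : ∀ x y : {x : V // x ≠ v}, Go₁.Adj x y ↔
      (Go.Adj (x : V) (y : V) ∨
        (((x : V) = u ∧ (y : V) = w) ∨ ((x : V) = w ∧ (y : V) = u)))) :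
    nuSigned Ge₁ Go₁ = nuSigned Ge Go := by
  have hR : IsSeriesParallelReduction Ge Go v u w Ge₁ Go₁ :=
    ⟨hbothE, hbothO, hnbr, honeu, hGe₁, hGo₁⟩
  unfold nuSigned
  congr 1
  ext n
  constructor
  · rintro ⟨B, hB, hpsd, hsap, rfl⟩
    exact hR.exists_of_reduced hB hpsd hsap
  · rintro ⟨A, hA, hpsd, hsap, rfl⟩
    exact hR.exists_reduced hA hpsd hsap

/-- a series-parallel reduction at `v` (contracting the edge `vu`)
preserves `ν`. -/
theorem stmt8 {V : Type*} [Fintype V] [DecidableEq V]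
    (Ge Go : SimpleGraph V) (v u w : V)
    (huv : u ≠ v) (huw : u ≠ w) (hvw : v ≠ w)
    (hbothE : Ge.Adj v w) (hbothO : Go.Adj v w)
    (hnbr : ∀ x, (Ge ⊔ Go).Adj v x ↔ (x = u ∨ x = w))
    (honeu : ¬(Ge.Adj v u ∧ Go.Adj v u))
    (Ge₁ Go₁ : SimpleGraph {x : V // x ≠ v})
    (hGe₁ : ∀ x y : {x : V // x ≠ v}, Ge₁.Adj x y ↔
      (Ge.Adj (x : V) (y : V) ∨
        (((x : V) = u ∧ (y : V) = w) ∨ ((x : V) = w ∧ (y : V) = u))))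
    (hGo₁ : ∀ x y : {x : V // x ≠ v}, Go₁.Adj x y ↔
      (Go.Adj (x : V) (y : V) ∨
        (((x : V) = u ∧ (y : V) = w) ∨ ((x : V) = w ∧ (y : V) = u)))) :
    nuSigned Ge₁ Go₁ = nuSigned Ge Go :=
  stmt8_general Ge Go v u w hbothE hbothO hnbr honeu Ge₁ Go₁ hGe₁ hGo₁
end

section
/- Let (Ge₁, Go₁) be a signed graph on a finite vertex type V₁ and (Ge₂, Go₂) a signed graph on a finite vertex type V₂, and let (Ge, Go) be their disjoint union on the sum type V₁ ⊕ V₂ (edges within each summand as before, no edges between the summands). Then ν(Ge, Go) = max(ν(Ge₁, Go₁), ν(Ge₂, Go₂)). -/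
open Matrix

/-!
A matrix in `S` of the disjoint union is block diagonal, `A = A₁ ⊕ A₂`; it is positive
semidefinite iff both blocks are, and its nullity is the sum of theirs. The test matrices of the
Strong Arnold Property split into the diagonal blocks, which test `A₁` and `A₂`, and an
off-diagonal part `[[0, B], [Bᵀ, 0]]` with `A₁ B = 0` and `A₂ Bᵀ = 0`; a nonzero such `B`
(e.g. `x yᵀ` for null vectors `x`, `y`) exists iff both blocks are singular. Hence an SAP matrix
for the union has a nonsingular block, and its nullity is at most `max(ν₁, ν₂)`. Conversely,
padding an optimal matrix for one summand with a positive definite matrix for the other (a large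
multiple of the identity plus the signed adjacency matrix) keeps the SAP and the nullity.
-/

section Nullity

variable {V : Type*} [Fintype V]

theorem matNullity_le_card (A : Matrix V V ℝ) : matNullity A ≤ Fintype.card V :=
  (Submodule.finrank_le _).trans_eq (Module.finrank_fintype_fun_eq_card ℝ)

theorem matNullity_eq_zero_iff {A : Matrix V V ℝ} :
    matNullity A = 0 ↔ ∀ v, A *ᵥ v = 0 → v = 0 := by
  rw [matNullity, Submodule.finrank_eq_zero, LinearMap.ker_eq_bot']
  rfl

theorem eq_zero_of_mul_eq_zero_of_matNullity_eq_zero {W : Type*} [Fintype W]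
    {A : Matrix V V ℝ} (hA : matNullity A = 0) {B : Matrix V W ℝ} (h : A * B = 0) : B = 0 := by
  refine ext_iff_mulVec.2 fun v => ?_
  rw [zero_mulVec]
  exact matNullity_eq_zero_iff.1 hA _ (by rw [mulVec_mulVec, h, zero_mulVec])

theorem Matrix.PosDef.matNullity_eq_zero {A : Matrix V V ℝ} (hA : A.PosDef) :
    matNullity A = 0 :=
  matNullity_eq_zero_iff.2 fun v hv => by
    by_contra hne
    simpa [hv] using hA.dotProduct_mulVec_pos hne

theorem hasSAP_of_matNullity_eq_zero {Ge Go : SimpleGraph V} {A : Matrix V V ℝ}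
    (hA : matNullity A = 0) : HasSAP Ge Go A :=
  fun _ _ _ h => eq_zero_of_mul_eq_zero_of_matNullity_eq_zero hA h

end Nullity

section PositiveDefinite

variable {V : Type*} [Fintype V]

theorem neg_card_mul_dotProduct_self_le {B : Matrix V V ℝ} (hB : ∀ i j, |B i j| ≤ 1)
    (x : V → ℝ) : -(Fintype.card V * (x ⬝ᵥ x)) ≤ x ⬝ᵥ B *ᵥ x := by
  have hquad : x ⬝ᵥ B *ᵥ x = ∑ i, ∑ j, x i * B i j * x j := by
    simp [dotProduct, mulVec, Finset.mul_sum, mul_assoc]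
  have hcard : Fintype.card V * (x ⬝ᵥ x) = ∑ i, ∑ j, (x i ^ 2 + x j ^ 2) / 2 := by
    simp [dotProduct, Finset.sum_add_distrib, ← Finset.sum_div, Finset.mul_sum, sq]
  rw [hquad, hcard, ← Finset.sum_neg_distrib]
  refine Finset.sum_le_sum fun i _ => ?_
  rw [← Finset.sum_neg_distrib]
  refine Finset.sum_le_sum fun j _ => ?_
  obtain ⟨hlo, hhi⟩ := abs_le.1 (hB i j)
  -- `(1 + b)(x + y)² + (1 - b)(x - y)² = 2(x² + y²) + 4bxy`
  nlinarith [mul_nonneg (neg_le_iff_add_nonneg.1 hlo) (sq_nonneg (x i + x j)),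
    mul_nonneg (sub_nonneg.2 hhi) (sq_nonneg (x i - x j))]

theorem exists_posDef_mem_signedSet (Ge Go : SimpleGraph V) :
    ∃ A ∈ SignedSet Ge Go, A.PosDef := by
  classical
  set B := Go.adjMatrix ℝ - Ge.adjMatrix ℝ with hB
  have hB_le : ∀ i j, |B i j| ≤ 1 := by
    intro i j
    simp only [hB, Matrix.sub_apply, SimpleGraph.adjMatrix_apply]
    split_ifs <;> norm_num
  have hsymm : ((Fintype.card V + 1 : ℝ) • 1 + B).IsSymm :=
    (isSymm_one.smul _).add (Go.isSymm_adjMatrix.sub Ge.isSymm_adjMatrix)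
  refine ⟨(Fintype.card V + 1 : ℝ) • 1 + B, ⟨hsymm, fun i j => ?_⟩, ?_⟩
  · refine ⟨fun ⟨he, ho⟩ => ?_, fun ⟨ho, he⟩ => ?_, fun ⟨hij, he, ho⟩ => ?_⟩
    · simp [hB, he, ho, he.ne]
    · simp [hB, he, ho, ho.ne]
    · simp [hB, he, ho, hij]
  · refine posDef_iff_dotProduct_mulVec.2 ⟨isHermitian_iff_isSymm.2 hsymm, fun x hx => ?_⟩
    have hxx : 0 < x ⬝ᵥ x := by simpa using PosDef.one.dotProduct_mulVec_pos hx
    have := neg_card_mul_dotProduct_self_le hB_le x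
    simp only [star_trivial, add_mulVec, smul_mulVec, one_mulVec, dotProduct_add,
      dotProduct_smul, smul_eq_mul]
    nlinarith

end PositiveDefinite

section BlockDiagonal

variable {V₁ V₂ : Type*} {Ge₁ Go₁ : SimpleGraph V₁} {Ge₂ Go₂ : SimpleGraph V₂}

theorem fromBlocks_eq_zero_iff {α : Type*} [Zero α] {A : Matrix V₁ V₁ α} {B : Matrix V₁ V₂ α}
    {C : Matrix V₂ V₁ α} {D : Matrix V₂ V₂ α} : fromBlocks A B C D = 0 ↔ A = 0 ∧ B = 0 ∧ C = 0 ∧ D = 0 := by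
  rw [← fromBlocks_zero, fromBlocks_inj]

theorem fromBlocks_mem_signedSet_sum_iff {A : Matrix V₁ V₁ ℝ} {D : Matrix V₂ V₂ ℝ} :
    fromBlocks A 0 0 D ∈ SignedSet (Ge₁ ⊕g Ge₂) (Go₁ ⊕g Go₂) ↔
      A ∈ SignedSet Ge₁ Go₁ ∧ D ∈ SignedSet Ge₂ Go₂ := by
  simp [SignedSet, isSymm_fromBlocks_iff, Sum.forall, forall_and]
  tauto

theorem eq_fromBlocks_of_mem_signedSet_sum {A : Matrix (V₁ ⊕ V₂) (V₁ ⊕ V₂) ℝ}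
    (hA : A ∈ SignedSet (Ge₁ ⊕g Ge₂) (Go₁ ⊕g Go₂)) :
    A = fromBlocks A.toBlocks₁₁ 0 0 A.toBlocks₂₂ := by
  conv_lhs => rw [← fromBlocks_toBlocks A]
  congr <;> ext i j <;> exact (hA.2 _ _).2.2 (by simp)

variable [Fintype V₁] [Fintype V₂]

theorem posSemidef_fromBlocks_zero_iff {A : Matrix V₁ V₁ ℝ} {D : Matrix V₂ V₂ ℝ} :
    (fromBlocks A 0 0 D).PosSemidef ↔ A.PosSemidef ∧ D.PosSemidef := by
  refine ⟨fun h => ⟨?_, ?_⟩, fun ⟨hA, hD⟩ => ?_⟩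
  · convert h.submatrix Sum.inl
    ext; simp
  · convert h.submatrix Sum.inr
    ext; simp
  · rw [posSemidef_iff_dotProduct_mulVec]
    refine ⟨hA.1.fromBlocks (by simp) hD.1, fun x => ?_⟩
    rw [← Sum.elim_comp_inl_inr x, fromBlocks_mulVec]
    simp only [star_trivial, zero_mulVec, add_zero, zero_add, sumElim_dotProduct_sumElim]
    exact add_nonneg (by simpa using hA.dotProduct_mulVec_nonneg _)
      (by simpa using hD.dotProduct_mulVec_nonneg _)

theorem fromBlocks_zero_mulVec_eq_zero_iff {α : Type*} [NonUnitalNonAssocSemiring α]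
    {A : Matrix V₁ V₁ α} {D : Matrix V₂ V₂ α} {x : V₁ ⊕ V₂ → α} :
    fromBlocks A 0 0 D *ᵥ x = 0 ↔ A *ᵥ (x ∘ Sum.inl) = 0 ∧ D *ᵥ (x ∘ Sum.inr) = 0 := by
  rw [fromBlocks_mulVec]
  simp [← Sum.elim_zero_zero, Sum.elim_eq_iff]

theorem matNullity_fromBlocks_zero (A : Matrix V₁ V₁ ℝ) (D : Matrix V₂ V₂ ℝ) :
    matNullity (fromBlocks A 0 0 D) = matNullity A + matNullity D := by
  let e : LinearMap.ker (fromBlocks A 0 0 D).mulVecLin ≃ₗ[ℝ]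
      LinearMap.ker A.mulVecLin × LinearMap.ker D.mulVecLin :=
    { toFun := fun x => (⟨x.1 ∘ Sum.inl, (fromBlocks_zero_mulVec_eq_zero_iff.1 x.2).1⟩,
        ⟨x.1 ∘ Sum.inr, (fromBlocks_zero_mulVec_eq_zero_iff.1 x.2).2⟩)
      invFun := fun p => ⟨Sum.elim p.1 p.2, fromBlocks_zero_mulVec_eq_zero_iff.2 ⟨p.1.2, p.2.2⟩⟩
      map_add' := fun _ _ => rfl
      map_smul' := fun _ _ => rfl
      left_inv := fun x => Subtype.ext (Sum.elim_comp_inl_inr x.1)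
      right_inv := fun _ => rfl }
  rw [matNullity, matNullity, matNullity, e.finrank_eq, Module.finrank_prod]

theorem forall_mul_eq_zero_mul_transpose_eq_zero_iff {A : Matrix V₁ V₁ ℝ}
    {D : Matrix V₂ V₂ ℝ} :
    (∀ B : Matrix V₁ V₂ ℝ, A * B = 0 → D * Bᵀ = 0 → B = 0) ↔
      matNullity A = 0 ∨ matNullity D = 0 := by
  constructor
  · contrapose!
    rintro ⟨hA, hD⟩
    obtain ⟨x, hAx, hx⟩ : ∃ x, A *ᵥ x = 0 ∧ x ≠ 0 := by simpa [matNullity_eq_zero_iff] using hA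
    obtain ⟨y, hDy, hy⟩ : ∃ y, D *ᵥ y = 0 ∧ y ≠ 0 := by simpa [matNullity_eq_zero_iff] using hD
    refine ⟨vecMulVec x y, by rw [mul_vecMulVec, hAx, zero_vecMulVec],
      by rw [transpose_vecMulVec, mul_vecMulVec, hDy, zero_vecMulVec], ?_⟩
    obtain ⟨i, hi⟩ := Function.ne_iff.1 hx
    obtain ⟨j, hj⟩ := Function.ne_iff.1 hy
    exact fun h => mul_ne_zero hi hj (congrFun₂ h i j)
  · rintro (hA | hD) B hAB hDB
    · exact eq_zero_of_mul_eq_zero_of_matNullity_eq_zero hA hAB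
    · exact transpose_eq_zero.1 (eq_zero_of_mul_eq_zero_of_matNullity_eq_zero hD hDB)

theorem hasSAP_fromBlocks_zero_iff {A : Matrix V₁ V₁ ℝ} {D : Matrix V₂ V₂ ℝ} :
    HasSAP (Ge₁ ⊕g Ge₂) (Go₁ ⊕g Go₂) (fromBlocks A 0 0 D) ↔
      HasSAP Ge₁ Go₁ A ∧ HasSAP Ge₂ Go₂ D ∧ (matNullity A = 0 ∨ matNullity D = 0) := by
  rw [← forall_mul_eq_zero_mul_transpose_eq_zero_iff]
  have vanish_iff (X₁₁ : Matrix V₁ V₁ ℝ) (X₁₂ : Matrix V₁ V₂ ℝ) (X₂₁ : Matrix V₂ V₁ ℝ)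
      (X₂₂ : Matrix V₂ V₂ ℝ) :
      (∀ i j, (i = j ∨ ((Ge₁ ⊕g Ge₂) ⊔ (Go₁ ⊕g Go₂)).Adj i j) →
          fromBlocks X₁₁ X₁₂ X₂₁ X₂₂ i j = 0) ↔
        (∀ i j, (i = j ∨ (Ge₁ ⊔ Go₁).Adj i j) → X₁₁ i j = 0) ∧
          (∀ i j, (i = j ∨ (Ge₂ ⊔ Go₂).Adj i j) → X₂₂ i j = 0) := by
    simp [Sum.forall, forall_and]
  have mul_eq (X₁₁ : Matrix V₁ V₁ ℝ) (X₁₂ : Matrix V₁ V₂ ℝ) (X₂₁ : Matrix V₂ V₁ ℝ)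
      (X₂₂ : Matrix V₂ V₂ ℝ) : fromBlocks A 0 0 D * fromBlocks X₁₁ X₁₂ X₂₁ X₂₂ =
        fromBlocks (A * X₁₁) (A * X₁₂) (D * X₂₁) (D * X₂₂) := by
    simp [fromBlocks_multiply]
  constructor
  · intro h
    refine ⟨fun X hs hv hm => ?_, fun X hs hv hm => ?_, fun B hAB hDB => ?_⟩
    · have := h (fromBlocks X 0 0 0) (hs.fromBlocks (by simp) (by simp))
        ((vanish_iff _ _ _ _).2 ⟨hv, by simp⟩) (by simp [mul_eq, hm])
      exact (fromBlocks_eq_zero_iff.1 this).1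
    · have := h (fromBlocks 0 0 0 X) (isSymm_zero.fromBlocks (by simp) hs)
        ((vanish_iff _ _ _ _).2 ⟨by simp, hv⟩) (by simp [mul_eq, hm])
      exact (fromBlocks_eq_zero_iff.1 this).2.2.2
    · have := h (fromBlocks 0 B Bᵀ 0) (isSymm_zero.fromBlocks rfl isSymm_zero)
        ((vanish_iff _ _ _ _).2 ⟨by simp, by simp⟩) (by simp [mul_eq, hAB, hDB])
      exact (fromBlocks_eq_zero_iff.1 this).2.1
  · rintro ⟨h₁, h₂, h₁₂⟩ X hs hv hm
    rw [← fromBlocks_toBlocks X] at hs hv hm ⊢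
    obtain ⟨hs₁, hBC, -, hs₂⟩ := isSymm_fromBlocks_iff.1 hs
    obtain ⟨hv₁, hv₂⟩ := (vanish_iff _ _ _ _).1 hv
    obtain ⟨hm₁₁, hm₁₂, hm₂₁, hm₂₂⟩ := fromBlocks_eq_zero_iff.1 ((mul_eq _ _ _ _).symm.trans hm)
    have hX₁₂ := h₁₂ _ hm₁₂ (hBC ▸ hm₂₁)
    rw [fromBlocks_eq_zero_iff, h₁ _ hs₁ hv₁ hm₁₁, h₂ _ hs₂ hv₂ hm₂₂, ← hBC, hX₁₂]
    simp

end BlockDiagonal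

section Nu

variable {V : Type*} [Fintype V] {Ge Go : SimpleGraph V}

theorem le_nuSigned {A : Matrix V V ℝ} (hA : A ∈ SignedSet Ge Go) (hpsd : A.PosSemidef)
    (hsap : HasSAP Ge Go A) : matNullity A ≤ nuSigned Ge Go :=
  le_csSup ⟨Fintype.card V, by rintro _ ⟨B, -, -, -, rfl⟩; exact matNullity_le_card B⟩
    ⟨A, hA, hpsd, hsap, rfl⟩

theorem nuSigned_le {n : ℕ}
    (h : ∀ A ∈ SignedSet Ge Go, A.PosSemidef → HasSAP Ge Go A → matNullity A ≤ n) :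
    nuSigned Ge Go ≤ n :=
  csSup_le' fun _ ⟨A, hA, hpsd, hsap, hn⟩ => hn ▸ h A hA hpsd hsap

end Nu

section DisjointUnion

variable {V₁ V₂ : Type*} [Fintype V₁] [Fintype V₂] {Ge₁ Go₁ : SimpleGraph V₁}
  {Ge₂ Go₂ : SimpleGraph V₂}

theorem nuSigned_sum_le :
    nuSigned (Ge₁ ⊕g Ge₂) (Go₁ ⊕g Go₂) ≤ max (nuSigned Ge₁ Go₁) (nuSigned Ge₂ Go₂) := by
  refine nuSigned_le fun A hA hpsd hsap => ?_
  obtain ⟨A₁, A₂, rfl⟩ : ∃ A₁ A₂, A = fromBlocks A₁ 0 0 A₂ :=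
    ⟨_, _, eq_fromBlocks_of_mem_signedSet_sum hA⟩
  obtain ⟨hA₁, hA₂⟩ := fromBlocks_mem_signedSet_sum_iff.1 hA
  obtain ⟨hpsd₁, hpsd₂⟩ := posSemidef_fromBlocks_zero_iff.1 hpsd
  obtain ⟨hsap₁, hsap₂, h₁ | h₂⟩ := hasSAP_fromBlocks_zero_iff.1 hsap
  · rw [matNullity_fromBlocks_zero, h₁, zero_add]
    exact (le_nuSigned hA₂ hpsd₂ hsap₂).trans (le_max_right _ _)
  · rw [matNullity_fromBlocks_zero, h₂, add_zero]
    exact (le_nuSigned hA₁ hpsd₁ hsap₁).trans (le_max_left _ _)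

theorem nuSigned_le_nuSigned_sum_left :
    nuSigned Ge₁ Go₁ ≤ nuSigned (Ge₁ ⊕g Ge₂) (Go₁ ⊕g Go₂) := by
  refine nuSigned_le fun A hA hpsd hsap => ?_
  obtain ⟨D, hD, hDpos⟩ := exists_posDef_mem_signedSet Ge₂ Go₂
  have hDnull := hDpos.matNullity_eq_zero
  calc matNullity A = matNullity (fromBlocks A 0 0 D) := by
        rw [matNullity_fromBlocks_zero, hDnull, add_zero]
    _ ≤ _ := le_nuSigned (fromBlocks_mem_signedSet_sum_iff.2 ⟨hA, hD⟩)
        (posSemidef_fromBlocks_zero_iff.2 ⟨hpsd, hDpos.posSemidef⟩)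
        (hasSAP_fromBlocks_zero_iff.2 ⟨hsap, hasSAP_of_matNullity_eq_zero hDnull, .inr hDnull⟩)

theorem nuSigned_le_nuSigned_sum_right :
    nuSigned Ge₂ Go₂ ≤ nuSigned (Ge₁ ⊕g Ge₂) (Go₁ ⊕g Go₂) := by
  refine nuSigned_le fun A hA hpsd hsap => ?_
  obtain ⟨D, hD, hDpos⟩ := exists_posDef_mem_signedSet Ge₁ Go₁
  have hDnull := hDpos.matNullity_eq_zero
  calc matNullity A = matNullity (fromBlocks D 0 0 A) := by
        rw [matNullity_fromBlocks_zero, hDnull, zero_add]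
    _ ≤ _ := le_nuSigned (fromBlocks_mem_signedSet_sum_iff.2 ⟨hD, hA⟩)
        (posSemidef_fromBlocks_zero_iff.2 ⟨hDpos.posSemidef, hpsd⟩)
        (hasSAP_fromBlocks_zero_iff.2 ⟨hasSAP_of_matNullity_eq_zero hDnull, hsap, .inl hDnull⟩)

end DisjointUnion

theorem stmt10_general {V₁ V₂ : Type*} [Fintype V₁] [Fintype V₂]
    (Ge₁ Go₁ : SimpleGraph V₁) (Ge₂ Go₂ : SimpleGraph V₂)
    (Ge Go : SimpleGraph (V₁ ⊕ V₂))
    (hGe : ∀ x y : V₁ ⊕ V₂, Ge.Adj x y ↔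
      ((∃ a b, x = Sum.inl a ∧ y = Sum.inl b ∧ Ge₁.Adj a b) ∨
       (∃ a b, x = Sum.inr a ∧ y = Sum.inr b ∧ Ge₂.Adj a b)))
    (hGo : ∀ x y : V₁ ⊕ V₂, Go.Adj x y ↔
      ((∃ a b, x = Sum.inl a ∧ y = Sum.inl b ∧ Go₁.Adj a b) ∨
       (∃ a b, x = Sum.inr a ∧ y = Sum.inr b ∧ Go₂.Adj a b))) :
    nuSigned Ge Go = max (nuSigned Ge₁ Go₁) (nuSigned Ge₂ Go₂) := by
  obtain rfl : Ge = Ge₁ ⊕g Ge₂ := by ext (a | a) (b | b) <;> simp [hGe]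
  obtain rfl : Go = Go₁ ⊕g Go₂ := by ext (a | a) (b | b) <;> simp [hGo]
  exact le_antisymm nuSigned_sum_le
    (max_le nuSigned_le_nuSigned_sum_left nuSigned_le_nuSigned_sum_right)

/-- `ν` of a disjoint union of two signed graphs is the maximum of the
`ν`'s of the two signed graphs. -/
theorem stmt10 {V₁ V₂ : Type*} [Fintype V₁] [Fintype V₂] [DecidableEq V₁] [DecidableEq V₂]
    (Ge₁ Go₁ : SimpleGraph V₁) (Ge₂ Go₂ : SimpleGraph V₂)
    (Ge Go : SimpleGraph (V₁ ⊕ V₂))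
    (hGe : ∀ x y : V₁ ⊕ V₂, Ge.Adj x y ↔
      ((∃ a b, x = Sum.inl a ∧ y = Sum.inl b ∧ Ge₁.Adj a b) ∨
       (∃ a b, x = Sum.inr a ∧ y = Sum.inr b ∧ Ge₂.Adj a b)))
    (hGo : ∀ x y : V₁ ⊕ V₂, Go.Adj x y ↔
      ((∃ a b, x = Sum.inl a ∧ y = Sum.inl b ∧ Go₁.Adj a b) ∨
       (∃ a b, x = Sum.inr a ∧ y = Sum.inr b ∧ Go₂.Adj a b))) :
    nuSigned Ge Go = max (nuSigned Ge₁ Go₁) (nuSigned Ge₂ Go₂) :=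
  stmt10_general Ge₁ Go₁ Ge₂ Go₂ Ge Go hGe hGo
end
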